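/- arXiv:2209.09289 — 4 statements merged into one kernel-verified Lean document; each statement's English description precedes it below -/
import Mathlib

section
/- Let $k,\ell,d$ be positive integers with $d<k$, let $0<\delta'<\delta<1$, and suppose $n$ and $\ell$ are sufficiently large in terms of $k$ and $\delta-\delta'$. Let $H$ be a $k$-uniform hypergraph on an $n$-vertex set $V$ such that every $d$-set $S\subseteq V$ satisfies $\deg(S,V)\ge\delta n^{k-d}$. Let $A\subseteq V$ be a uniformly random set of size $\ell$. Then for every $d$-set $T\subseteq V$, $\mathbb{P}[\deg(T,A)<\delta'\ell^{k-d}]\le 2\exp(-\ell(\delta-\delta')^2/2)$. -/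
/-!
Write `m = k - d` and `f A = deg(T, A)`. Exchanging one element of `A` for another changes
`f A` by at most `c = C(ℓ - 1, m - 1)`, the number of `m`-subsets of `A` through the removed
element. For any function of a uniform `r`-subset with this property the moment generating
function of `𝔼 f - f` is at most `exp (λ² r c² / 2)`. Indeed, averaging over the `(r + 1)`-subsets
of `V` is the same as averaging over `x ∈ V` and then over the `r`-subsets `A'` of `V \ {x}` of
`insert x A'`; the conditional means for two choices `x`, `y` differ by at most `c` (apply the
transposition `(x y)`), so Hoeffding's lemma handles `x` and induction on `r` handles `A'`.
Chernoff's bound then gives `P[f < 𝔼 f - t] ≤ exp (-t² / (2 r c²))`.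

Double counting gives `𝔼 f = deg(T, V) C(ℓ, m) / C(n, m) ≥ δ m! C(ℓ, m)`, and `m! C(ℓ, m)` is
`ℓ^m` up to a relative error `O(m² / ℓ)`. Taking `t = 𝔼 f - δ' ℓ^m`, the exponent
`t² / (2 ℓ c²)` is at least `ℓ (δ - δ')² / 2 - 1 / 2` once `ℓ ≥ 4 k² / (δ - δ')`, and
`e^{1/2} < 2`.
-/

open scoped BigOperators Nat

open Finset Real

lemma exp_mul_le_cosh_add_div_mul_sinh {y c : ℝ} (hy : |y| ≤ c) (l : ℝ) :
    exp (l * y) ≤ cosh (l * c) + y / c * sinh (l * c) := by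
  rcases (abs_nonneg y).trans hy |>.eq_or_lt with rfl | hc
  · simp [abs_nonpos_iff.1 hy]
  obtain ⟨hy₁, hy₂⟩ := abs_le.1 hy
  have ha : 0 ≤ (c - y) / (2 * c) := div_nonneg (by linarith) (by positivity)
  have hb : 0 ≤ (c + y) / (2 * c) := div_nonneg (by linarith) (by positivity)
  have key := convexOn_exp.2 (Set.mem_univ (-(l * c))) (Set.mem_univ (l * c)) ha hb
    (by field_simp; ring)
  have harg : (c - y) / (2 * c) * -(l * c) + (c + y) / (2 * c) * (l * c) = l * y := by
    field_simp; ring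
  simp only [smul_eq_mul, harg] at key
  refine key.trans_eq ?_
  rw [cosh_eq, sinh_eq]; field_simp; ring

lemma expect_exp_mul_expect_sub_le {ι : Type*} (s : Finset ι) (g : ι → ℝ) {c : ℝ}
    (hg : ∀ x ∈ s, ∀ y ∈ s, |g x - g y| ≤ c) (l : ℝ) :
    𝔼 x ∈ s, exp (l * ((𝔼 y ∈ s, g y) - g x)) ≤ exp (l ^ 2 * c ^ 2 / 2) := by
  rcases s.eq_empty_or_nonempty with rfl | hs
  · simpa using (exp_pos _).le
  have hdev : ∀ x ∈ s, |(𝔼 y ∈ s, g y) - g x| ≤ c := by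
    intro x hx
    rw [← expect_const hs (g x), ← expect_sub_distrib]
    exact (abs_expect_le _ _).trans (expect_le hs fun y hy => hg y hy x hx)
  calc 𝔼 x ∈ s, exp (l * ((𝔼 y ∈ s, g y) - g x))
      ≤ 𝔼 x ∈ s, (cosh (l * c) + ((𝔼 y ∈ s, g y) - g x) / c * sinh (l * c)) :=
        expect_le_expect fun x hx => exp_mul_le_cosh_add_div_mul_sinh (hdev x hx) l
    _ = cosh (l * c) := by
        rw [expect_add_distrib, expect_const hs, ← expect_mul, ← expect_div,
          expect_sub_distrib, expect_const hs, sub_self, zero_div, zero_mul, add_zero]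
    _ ≤ exp (l ^ 2 * c ^ 2 / 2) := by
        rw [← mul_pow]; exact cosh_le_exp_half_sq _

variable {α : Type*} [DecidableEq α]

def IsSwapLipschitz (V : Finset α) (r : ℕ) (c : ℝ) (f : Finset α → ℝ) : Prop :=
  ∀ A ∈ V.powersetCard r, ∀ x ∈ A, ∀ y ∈ V, y ∉ A → |f A - f (insert y (A.erase x))| ≤ c

lemma insert_mem_powersetCard_succ {V A : Finset α} {r : ℕ} {x : α} (hx : x ∈ V)
    (hA : A ∈ (V.erase x).powersetCard r) : insert x A ∈ V.powersetCard (r + 1) := by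
  rw [mem_powersetCard] at hA ⊢
  have hxA : x ∉ A := fun h => by simpa using hA.1 h
  exact ⟨insert_subset hx (hA.1.trans (erase_subset _ _)), by rw [card_insert_of_notMem hxA, hA.2]⟩

lemma sum_sum_powersetCard_erase_insert (V : Finset α) (r : ℕ) (g : Finset α → ℝ) :
    ∑ x ∈ V, ∑ A ∈ (V.erase x).powersetCard r, g (insert x A) =
      (r + 1) * ∑ B ∈ V.powersetCard (r + 1), g B := by
  have hfiber : ∀ x ∈ V, ∑ A ∈ (V.erase x).powersetCard r, g (insert x A) =
      ∑ B ∈ V.powersetCard (r + 1), if x ∈ B then g B else 0 := by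
    intro x hx
    rw [← sum_filter]
    refine sum_nbij' (insert x) (fun B => B.erase x) (fun A hA => ?_) (fun B hB => ?_)
      (fun A hA => ?_) (fun B hB => ?_) (fun _ _ => rfl)
    · exact mem_filter.2 ⟨insert_mem_powersetCard_succ hx hA, mem_insert_self x A⟩
    · obtain ⟨hB, hxB⟩ := mem_filter.1 hB
      rw [mem_powersetCard] at hB ⊢
      exact ⟨erase_subset_erase _ hB.1, by rw [card_erase_of_mem hxB, hB.2, Nat.add_sub_cancel]⟩
    · exact erase_insert fun h => by simpa using (mem_powersetCard.1 hA).1 h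
    · exact insert_erase (mem_filter.1 hB).2
  rw [sum_congr rfl hfiber, sum_comm, mul_sum]
  refine sum_congr rfl fun B hB => ?_
  rw [mem_powersetCard] at hB
  rw [sum_ite_mem, inter_eq_right.2 hB.1, sum_const, hB.2, nsmul_eq_mul]
  push_cast; ring

lemma expect_powersetCard_succ (V : Finset α) (r : ℕ) (g : Finset α → ℝ) :
    𝔼 B ∈ V.powersetCard (r + 1), g B =
      𝔼 x ∈ V, 𝔼 A ∈ (V.erase x).powersetCard r, g (insert x A) := by
  rcases V.eq_empty_or_nonempty with rfl | hV
  · rw [powersetCard_eq_empty.2 (by simp), expect_empty, expect_empty]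
  obtain ⟨n, hn⟩ := Nat.exists_eq_add_one.2 hV.card_pos
  have hfiber : ∀ x ∈ V, 𝔼 A ∈ (V.erase x).powersetCard r, g (insert x A) =
      (∑ A ∈ (V.erase x).powersetCard r, g (insert x A)) / n.choose r := by
    intro x hx
    rw [expect_eq_sum_div_card, card_powersetCard, card_erase_of_mem hx, hn, Nat.add_sub_cancel]
  rw [expect_congr rfl hfiber, ← expect_div, expect_eq_sum_div_card, expect_eq_sum_div_card,
    sum_sum_powersetCard_erase_insert, card_powersetCard, hn, div_div]
  have hchoose : ((n + 1 : ℕ) : ℝ) * n.choose r = (n + 1).choose (r + 1) * (r + 1) := by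
    exact_mod_cast Nat.add_one_mul_choose_eq n r
  rw [hchoose, mul_comm _ ((r : ℝ) + 1), mul_div_mul_left _ _ (by positivity)]

lemma map_swap_eq_self {x y : α} {B : Finset α} (hx : x ∈ B) (hy : y ∈ B) :
    B.map (Equiv.swap x y).toEmbedding = B := by
  ext a
  simp only [mem_map_equiv, Equiv.symm_swap, Equiv.swap_apply_def]
  split_ifs <;> grind

lemma map_swap_eq_insert_erase {x y : α} {B : Finset α} (hx : x ∈ B) (hy : y ∉ B) :
    B.map (Equiv.swap x y).toEmbedding = insert y (B.erase x) := by
  ext a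
  simp only [mem_map_equiv, Equiv.symm_swap, Equiv.swap_apply_def, mem_insert, mem_erase]
  split_ifs <;> grind

namespace IsSwapLipschitz

variable {V : Finset α} {r : ℕ} {c : ℝ} {f : Finset α → ℝ}

lemma abs_sub_map_swap_le (hf : IsSwapLipschitz V r c f) (hc : 0 ≤ c) {B : Finset α}
    (hB : B ∈ V.powersetCard r) {x y : α} (hx : x ∈ B) (hy : y ∈ V) :
    |f B - f (B.map (Equiv.swap x y).toEmbedding)| ≤ c := by
  by_cases hyB : y ∈ B
  · rwa [map_swap_eq_self hx hyB, sub_self, abs_zero]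
  · rw [map_swap_eq_insert_erase hx hyB]
    exact hf B hB x hx y hy hyB

lemma comp_insert (hf : IsSwapLipschitz V (r + 1) c f) {x : α} (hx : x ∈ V) :
    IsSwapLipschitz (V.erase x) r c (fun A => f (insert x A)) := by
  intro A hA u hu v hv hvA
  have hux : u ≠ x := by rintro rfl; simpa using (mem_powersetCard.1 hA).1 hu
  have hvx : v ≠ x := ne_of_mem_erase hv
  have := hf (insert x A) (insert_mem_powersetCard_succ hx hA) u (mem_insert_of_mem hu) v
    (mem_of_mem_erase hv) (by simp [hvx, hvA])
  rwa [erase_insert_of_ne hux.symm, insert_comm] at this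

lemma abs_expect_insert_sub_le (hf : IsSwapLipschitz V (r + 1) c f) (hc : 0 ≤ c)
    {x y : α} (hx : x ∈ V) (hy : y ∈ V) :
    |𝔼 A ∈ (V.erase x).powersetCard r, f (insert x A) -
      𝔼 A ∈ (V.erase y).powersetCard r, f (insert y A)| ≤ c := by
  set σ := (Equiv.swap x y).toEmbedding
  have hV : (V.erase x).map σ = V.erase y := by
    rw [map_erase, map_swap_eq_self hx hy]; simp [σ]
  have hσ : 𝔼 A ∈ (V.erase y).powersetCard r, f (insert y A) =
      𝔼 A ∈ (V.erase x).powersetCard r, f ((insert x A).map σ) := by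
    rw [← hV, powersetCard_map, map_eq_image,
      expect_image (mapEmbedding σ).toEmbedding.injective.injOn]
    refine expect_congr rfl fun A _ => ?_
    simp [σ, map_insert]
  rw [hσ, ← expect_sub_distrib]
  refine (abs_expect_le _ _).trans ?_
  rcases ((V.erase x).powersetCard r).eq_empty_or_nonempty with h | h
  · simpa [h]
  exact expect_le h fun A hA =>
    hf.abs_sub_map_swap_le hc (insert_mem_powersetCard_succ hx hA) (mem_insert_self x A) hy

theorem expect_exp_mul_expect_sub_le (hf : IsSwapLipschitz V r c f) (hc : 0 ≤ c) (l : ℝ) :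
    𝔼 A ∈ V.powersetCard r, exp (l * ((𝔼 B ∈ V.powersetCard r, f B) - f A)) ≤
      exp (l ^ 2 * r * c ^ 2 / 2) := by
  induction r generalizing V f with
  | zero => simp
  | succ r ih =>
    set μ := 𝔼 B ∈ V.powersetCard (r + 1), f B
    set μx := fun x => 𝔼 A ∈ (V.erase x).powersetCard r, f (insert x A)
    have hμ : μ = 𝔼 x ∈ V, μx x := expect_powersetCard_succ V r f
    calc 𝔼 B ∈ V.powersetCard (r + 1), exp (l * (μ - f B))
        = 𝔼 x ∈ V, 𝔼 A ∈ (V.erase x).powersetCard r, exp (l * (μ - f (insert x A))) :=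
          expect_powersetCard_succ V r _
      _ = 𝔼 x ∈ V, exp (l * (μ - μx x)) *
            𝔼 A ∈ (V.erase x).powersetCard r, exp (l * (μx x - f (insert x A))) := by
          refine expect_congr rfl fun x _ => ?_
          rw [mul_expect]
          refine expect_congr rfl fun A _ => ?_
          rw [← exp_add]; ring_nf
      _ ≤ 𝔼 x ∈ V, exp (l * (μ - μx x)) * exp (l ^ 2 * r * c ^ 2 / 2) :=
          expect_le_expect fun x hx =>
            mul_le_mul_of_nonneg_left (ih (hf.comp_insert hx)) (exp_pos _).le
      _ = (𝔼 x ∈ V, exp (l * (μ - μx x))) * exp (l ^ 2 * r * c ^ 2 / 2) :=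
          (expect_mul _ _ _).symm
      _ ≤ exp (l ^ 2 * c ^ 2 / 2) * exp (l ^ 2 * r * c ^ 2 / 2) := by
          rw [hμ]
          gcongr
          exact _root_.expect_exp_mul_expect_sub_le V μx
            (fun x hx y hy => hf.abs_expect_insert_sub_le hc hx hy) l
      _ = exp (l ^ 2 * ↑(r + 1) * c ^ 2 / 2) := by
          rw [← exp_add]; push_cast; ring_nf

theorem card_filter_lt_expect_sub_div_card_le (hf : IsSwapLipschitz V r c f) (hc : 0 ≤ c)
    {t : ℝ} (ht : 0 ≤ t) :
    (#{A ∈ V.powersetCard r | f A < (𝔼 B ∈ V.powersetCard r, f B) - t} : ℝ) /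
        #(V.powersetCard r) ≤ exp (-(t ^ 2 / (2 * (r * c ^ 2)))) := by
  set μ := 𝔼 B ∈ V.powersetCard r, f B
  set D : ℝ := r * c ^ 2
  set l := t / D
  have hl : 0 ≤ l := by positivity
  calc (#{A ∈ V.powersetCard r | f A < μ - t} : ℝ) / #(V.powersetCard r)
      = 𝔼 A ∈ V.powersetCard r, if f A < μ - t then (1 : ℝ) else 0 := by
        rw [expect_eq_sum_div_card, sum_boole]
    _ ≤ 𝔼 A ∈ V.powersetCard r, exp (l * (μ - f A)) * exp (-(l * t)) := by
        refine expect_le_expect fun A _ => ?_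
        rw [← exp_add]
        split_ifs with hA
        · exact one_le_exp (by nlinarith)
        · exact (exp_pos _).le
    _ = (𝔼 A ∈ V.powersetCard r, exp (l * (μ - f A))) * exp (-(l * t)) :=
        (expect_mul _ _ _).symm
    _ ≤ exp (l ^ 2 * r * c ^ 2 / 2) * exp (-(l * t)) := by
        gcongr; exact hf.expect_exp_mul_expect_sub_le hc l
    _ = exp (-(t ^ 2 / (2 * D))) := by
        rw [← exp_add]
        congr 1
        rcases eq_or_ne D 0 with hD | hD
        · simp [l, hD]
        · simp only [l, D] at hD ⊢; field_simp; ring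

end IsSwapLipschitz

section Counting

variable (P : Finset α → Prop) [DecidablePred P]

lemma card_filter_powersetCard_succ_le {A B : Finset α} {x : α} (hx : x ∈ A)
    (hAB : A.erase x ⊆ B) (m : ℕ) :
    #{W ∈ A.powersetCard (m + 1) | P W} ≤
      #{W ∈ B.powersetCard (m + 1) | P W} + (#A - 1).choose m := by
  rw [← insert_erase hx, powersetCard_succ_insert (notMem_erase x A), filter_union,
    insert_erase hx]
  refine (card_union_le _ _).trans (add_le_add ?_ ?_)
  · exact card_le_card (filter_subset_filter _ (powersetCard_mono hAB))
  · calc _ ≤ #(((A.erase x).powersetCard m).image (insert x)) := card_filter_le _ _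
      _ ≤ (#A - 1).choose m := by
        rw [← card_erase_of_mem hx, ← card_powersetCard]; exact card_image_le

lemma isSwapLipschitz_card_filter_powersetCard (V : Finset α) (ℓ m : ℕ) :
    IsSwapLipschitz V ℓ ((ℓ - 1).choose m)
      (fun A => (#{W ∈ A.powersetCard (m + 1) | P W} : ℝ)) := by
  intro A hA x hx y _ hy
  have hA : #A = ℓ := (mem_powersetCard.1 hA).2
  have hyx : y ∉ A.erase x := fun h => hy (mem_of_mem_erase h)
  have h₁ := card_filter_powersetCard_succ_le P hx (subset_insert y (A.erase x)) m
  have h₂ := card_filter_powersetCard_succ_le P (mem_insert_self y (A.erase x))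
    ((erase_insert hyx).trans_subset (erase_subset x A)) m
  rw [card_insert_of_notMem hyx, card_erase_of_mem hx, Nat.sub_add_cancel (card_pos.2 ⟨x, hx⟩),
    hA] at h₂
  rw [hA] at h₁
  simp only [abs_sub_le_iff, sub_le_iff_le_add']
  exact ⟨by exact_mod_cast h₁, by exact_mod_cast h₂⟩

lemma expect_card_filter_powersetCard (V : Finset α) {ℓ m : ℕ} (hmℓ : m ≤ ℓ) (hℓ : ℓ ≤ #V) :
    𝔼 A ∈ V.powersetCard ℓ, (#{W ∈ A.powersetCard m | P W} : ℝ) =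
      #{W ∈ V.powersetCard m | P W} * ℓ.choose m / (#V).choose m := by
  have hfiber : ∀ A ∈ V.powersetCard ℓ, {W ∈ A.powersetCard m | P W} =
      ({W ∈ V.powersetCard m | P W}).bipartiteAbove (fun A W => W ⊆ A) A := by
    intro A hA
    ext W
    simp only [bipartiteAbove, mem_filter, mem_powersetCard]
    have := (mem_powersetCard.1 hA).1
    constructor
    · exact fun h => ⟨⟨⟨h.1.1.trans this, h.1.2⟩, h.2⟩, h.1.1⟩
    · exact fun h => ⟨⟨h.2, h.1.1.2⟩, h.1.2⟩
  have hsupersets : ∀ W ∈ {W ∈ V.powersetCard m | P W},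
      #((V.powersetCard ℓ).bipartiteBelow (fun A W => W ⊆ A) W) = (#V - m).choose (ℓ - m) := by
    intro W hW
    obtain ⟨⟨hWV, hWm⟩, -⟩ := mem_filter.1 hW |>.imp_left mem_powersetCard.1
    rw [bipartiteBelow, ← hWm]
    exact card_filter_powersetCard_subset W V ℓ hWV (hWm ▸ hmℓ)
  have hsum : ∑ A ∈ V.powersetCard ℓ, #{W ∈ A.powersetCard m | P W} =
      #{W ∈ V.powersetCard m | P W} * (#V - m).choose (ℓ - m) := by
    rw [sum_congr rfl fun A hA => congrArg card (hfiber A hA),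
      sum_card_bipartiteAbove_eq_sum_card_bipartiteBelow, sum_congr rfl hsupersets, sum_const,
      smul_eq_mul]
  have hchoose : ((#V).choose ℓ : ℝ) * ℓ.choose m = (#V).choose m * (#V - m).choose (ℓ - m) := by
    exact_mod_cast Nat.choose_mul hmℓ
  have hℓpos : (0 : ℝ) < (#V).choose ℓ := by exact_mod_cast Nat.choose_pos hℓ
  have hmpos : (0 : ℝ) < (#V).choose m := by exact_mod_cast Nat.choose_pos (hmℓ.trans hℓ)
  rw [expect_eq_sum_div_card, card_powersetCard, ← Nat.cast_sum, hsum,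
    div_eq_div_iff hℓpos.ne' hmpos.ne']
  push_cast
  linear_combination (#{W ∈ V.powersetCard m | P W} : ℝ) * hchoose.symm

lemma le_expect_card_filter_powersetCard (V : Finset α) {ℓ m : ℕ} (hmℓ : m ≤ ℓ) (hℓ : ℓ ≤ #V)
    {δ : ℝ} (hδ : 0 ≤ δ) (hP : δ * #V ^ m ≤ #{W ∈ V.powersetCard m | P W}) :
    δ * (m ! * ℓ.choose m) ≤ 𝔼 A ∈ V.powersetCard ℓ, (#{W ∈ A.powersetCard m | P W} : ℝ) := by
  have hpos : (0 : ℝ) < (#V).choose m := by exact_mod_cast Nat.choose_pos (hmℓ.trans hℓ)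
  have hchoose : (m ! : ℝ) * (#V).choose m ≤ #V ^ m := by
    rw [← le_div_iff₀' (by positivity)]; exact Nat.choose_le_pow_div m #V
  rw [expect_card_filter_powersetCard P V hmℓ hℓ, le_div_iff₀ hpos]
  calc δ * (m ! * ℓ.choose m) * (#V).choose m = δ * (m ! * (#V).choose m) * ℓ.choose m := by ring
    _ ≤ δ * #V ^ m * ℓ.choose m := by gcongr
    _ ≤ #{W ∈ V.powersetCard m | P W} * ℓ.choose m := by gcongr

end Counting

lemma pow_mul_one_sub_le_sub_pow (j : ℕ) {ℓ : ℝ} (hℓ : 0 < ℓ) (hj : j ≤ ℓ) :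
    ℓ ^ j * (1 - j ^ 2 / ℓ) ≤ (ℓ - j) ^ j := by
  have hbern := one_add_mul_le_pow (a := -(j / ℓ)) (by
    have : (j : ℝ) / ℓ ≤ 1 := (div_le_one hℓ).2 hj
    linarith) j
  calc ℓ ^ j * (1 - j ^ 2 / ℓ) = ℓ ^ j * (1 + j * -(j / ℓ)) := by ring
    _ ≤ ℓ ^ j * (1 + -(j / ℓ)) ^ j := by gcongr
    _ = (ℓ - j) ^ j := by rw [← mul_pow]; congr 1; field_simp; ring

lemma pow_succ_le_factorial_mul_choose_mul (j ℓ : ℕ) (h : 2 * (j : ℝ) ^ 2 ≤ ℓ) :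
    (ℓ : ℝ) ^ (j + 1) ≤ j ! * (ℓ - 1).choose j * (ℓ + 2 * j ^ 2) := by
  rcases Nat.eq_zero_or_pos ℓ with rfl | hℓ
  · obtain rfl : j = 0 := by
      by_contra hj
      have : (0 : ℝ) < j := Nat.cast_pos.2 (Nat.pos_of_ne_zero hj)
      norm_num at h; nlinarith
    simp
  have hℓR : (0 : ℝ) < ℓ := by exact_mod_cast hℓ
  have hjℓ : j ≤ ℓ := by
    have : 2 * j ^ 2 ≤ ℓ := by exact_mod_cast h
    have := Nat.le_self_pow two_ne_zero j
    omega
  have hdesc : ((ℓ : ℝ) - j) ^ j ≤ j ! * (ℓ - 1).choose j := by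
    have := Nat.pow_le_choose (α := ℝ) j (ℓ - 1)
    rw [show ℓ - 1 + 1 - j = ℓ - j by omega, Nat.cast_sub hjℓ, div_le_iff₀' (by positivity)] at this
    exact this
  have hgain : (ℓ : ℝ) ≤ (1 - j ^ 2 / ℓ) * (ℓ + 2 * j ^ 2) := by
    have : (1 - j ^ 2 / ℓ) * (ℓ + 2 * j ^ 2) - ℓ = (j ^ 2 * (ℓ - 2 * j ^ 2) / ℓ : ℝ) := by
      field_simp; ring
    have : (0 : ℝ) ≤ j ^ 2 * (ℓ - 2 * j ^ 2) / ℓ :=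
      div_nonneg (mul_nonneg (by positivity) (by linarith)) hℓR.le
    linarith
  calc (ℓ : ℝ) ^ (j + 1) ≤ ℓ ^ j * ((1 - j ^ 2 / ℓ) * (ℓ + 2 * j ^ 2)) := by
        rw [pow_succ]; gcongr
    _ = ℓ ^ j * (1 - j ^ 2 / ℓ) * (ℓ + 2 * j ^ 2) := by ring
    _ ≤ j ! * (ℓ - 1).choose j * (ℓ + 2 * j ^ 2) := by
        refine mul_le_mul_of_nonneg_right ?_ (by positivity)
        exact (pow_mul_one_sub_le_sub_pow j hℓR (by exact_mod_cast hjℓ)).trans hdesc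

lemma factorial_mul_choose_mul_sub_le (j ℓ : ℕ) (hℓ : 2 * (j : ℝ) ^ 2 ≤ ℓ) {δ δ' : ℝ}
    (hδ' : 0 ≤ δ') :
    j ! * (ℓ - 1).choose j * (ℓ * (δ - δ') - 2 * δ' * j ^ 2) ≤
      δ * ((j + 1)! * ℓ.choose (j + 1)) - δ' * ℓ ^ (j + 1) := by
  have hpascal : ((j + 1)! * ℓ.choose (j + 1) : ℝ) = j ! * (ℓ - 1).choose j * ℓ := by
    rcases ℓ with _ | ℓ
    · simp
    have := Nat.add_one_mul_choose_eq ℓ j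
    rw [Nat.factorial_succ, Nat.add_sub_cancel]
    push_cast
    rw [show ((ℓ : ℝ) + 1) = ((ℓ + 1 : ℕ) : ℝ) by push_cast; ring]
    linear_combination (j ! : ℝ) * (by exact_mod_cast this.symm :
      ((ℓ + 1).choose (j + 1) : ℝ) * (j + 1) = (ℓ + 1 : ℕ) * ℓ.choose j)
  rw [hpascal]
  nlinarith [mul_le_mul_of_nonneg_left (pow_succ_le_factorial_mul_choose_mul j ℓ hℓ) hδ']

/-- For `j ≥ 2` the factor `j! ≥ 2` absorbs the error term; for `j ≤ 1` the loss is at most `ℓ`,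
which the factor `2` in the final bound pays for. -/
lemma mul_sq_sub_one_le_sq (j : ℕ) {ℓ Δ δ' : ℝ} (hℓ : 0 ≤ ℓ) (hδ' : 0 ≤ δ')
    (hδ'Δ : 4 * δ' * Δ ≤ 1) (hj : 4 * δ' * j ^ 2 ≤ ℓ * Δ) :
    ℓ * (ℓ * Δ ^ 2 - 1) ≤ (j ! * (ℓ * Δ - 2 * δ' * j ^ 2)) ^ 2 := by
  rcases le_or_gt j 1 with hj1 | hj2
  · have hfact : (j ! : ℝ) = 1 := by interval_cases j <;> simp
    have hj21 : (j : ℝ) ^ 2 ≤ 1 := by interval_cases j <;> simp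
    rw [hfact, one_mul]
    nlinarith [mul_le_mul_of_nonneg_left hδ'Δ (mul_nonneg hℓ (sq_nonneg (j : ℝ))),
      sq_nonneg (2 * δ' * j ^ 2)]
  · have hfact : (2 : ℝ) ≤ j ! := by
      exact_mod_cast (Nat.factorial_le hj2 : (2 : ℕ)! ≤ j !)
    have hℓΔ : 0 ≤ ℓ * Δ := le_trans (by positivity) hj
    have hgap : ℓ * Δ ≤ j ! * (ℓ * Δ - 2 * δ' * j ^ 2) := by
      nlinarith [mul_le_mul_of_nonneg_right hfact (by linarith : 0 ≤ ℓ * Δ - 2 * δ' * j ^ 2)]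
    nlinarith [pow_le_pow_left₀ hℓΔ hgap 2]

lemma sub_one_div_two_le_sq_div {ℓ c b t Δ : ℝ} (hℓ : 0 < ℓ) (hc : 0 < c) (hb : 0 ≤ b)
    (hbt : c * b ≤ t) (hsq : ℓ * (ℓ * Δ ^ 2 - 1) ≤ b ^ 2) :
    (ℓ * Δ ^ 2 - 1) / 2 ≤ t ^ 2 / (2 * (ℓ * c ^ 2)) := by
  have ht := pow_le_pow_left₀ (mul_nonneg hc.le hb) hbt 2
  rw [le_div_iff₀ (by positivity)]
  nlinarith [mul_le_mul_of_nonneg_right hsq (sq_nonneg c)]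

lemma exp_le_two_mul_exp_of_le_add_half {x y : ℝ} (h : x ≤ y + 1 / 2) :
    exp x ≤ 2 * exp y := by
  have hlog : (1 : ℝ) / 2 < log 2 := by have := log_two_gt_d9; norm_num at this ⊢; linarith
  calc exp x ≤ exp (log 2 + y) := exp_le_exp.2 (by linarith)
    _ = 2 * exp y := by rw [exp_add, exp_log two_pos]

theorem stmt_4_general (k d : ℕ) (hdk : d < k) (δ δ' : ℝ)
    (h0 : 0 < δ') (h1 : δ' < δ) (h2 : δ < 1) :
    ∃ N : ℕ, ∀ n ℓ : ℕ, N ≤ n → N ≤ ℓ → ℓ ≤ n →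
      ∀ H : Finset (Finset (Fin n)), (∀ e ∈ H, e.card = k) →
        (∀ S : Finset (Fin n), S.card = d →
          δ * (n : ℝ) ^ (k - d) ≤
            ((((Finset.univ : Finset (Fin n)).powersetCard (k - d)).filter
              (fun W => S ∪ W ∈ H)).card : ℝ)) →
        ∀ T : Finset (Fin n), T.card = d →
          ((((Finset.univ : Finset (Fin n)).powersetCard ℓ).filter
              (fun A => (((A.powersetCard (k - d)).filter
                (fun W => T ∪ W ∈ H)).card : ℝ) < δ' * (ℓ : ℝ) ^ (k - d))).card : ℝ) /
            ((((Finset.univ : Finset (Fin n)).powersetCard ℓ).card : ℝ)) ≤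
            2 * Real.exp (-(ℓ : ℝ) * (δ - δ') ^ 2 / 2) := by
  obtain ⟨j, hj⟩ : ∃ j, k - d = j + 1 := ⟨k - d - 1, by omega⟩
  refine ⟨⌈4 * k ^ 2 / (δ - δ')⌉₊ + k, fun n ℓ _ hℓ hℓn H _ hdeg T hT => ?_⟩
  rw [hj]
  have hℓ0 : (0 : ℝ) < ℓ := by exact_mod_cast (by omega : 0 < ℓ)
  have hjℓ : 4 * (j : ℝ) ^ 2 ≤ ℓ * (δ - δ') := by
    have hjk : (j : ℝ) ≤ k := by exact_mod_cast (by omega : j ≤ k)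
    have hkℓ : 4 * (k : ℝ) ^ 2 ≤ ℓ * (δ - δ') :=
      (div_le_iff₀ (sub_pos.2 h1)).1 (Nat.ceil_le.1 (by omega))
    nlinarith
  set μ := 𝔼 A ∈ univ.powersetCard ℓ, (#{W ∈ A.powersetCard (j + 1) | T ∪ W ∈ H} : ℝ)
  have hμ : δ * ((j + 1)! * ℓ.choose (j + 1)) ≤ μ :=
    le_expect_card_filter_powersetCard _ univ (by omega) (by simpa using hℓn) (by linarith)
      (by simpa [hj] using hdeg T hT)
  set b := j ! * (ℓ * (δ - δ') - 2 * δ' * j ^ 2)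
  have hgap : ((ℓ - 1).choose j : ℝ) * b ≤ μ - δ' * ℓ ^ (j + 1) := by
    have := factorial_mul_choose_mul_sub_le j ℓ (by nlinarith) h0.le (δ := δ)
    simp only [b]; linarith
  have hsq : ℓ * (ℓ * (δ - δ') ^ 2 - 1) ≤ b ^ 2 :=
    mul_sq_sub_one_le_sq j hℓ0.le h0.le (by nlinarith [sq_nonneg (2 * δ' - δ)]) (by nlinarith)
  have hb : 0 ≤ b := mul_nonneg (by positivity) (by nlinarith)
  have htail := (isSwapLipschitz_card_filter_powersetCard (fun W => T ∪ W ∈ H) univ ℓ j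
    ).card_filter_lt_expect_sub_div_card_le (Nat.cast_nonneg _) (le_trans (by positivity) hgap)
  rw [sub_sub_cancel] at htail
  refine htail.trans (exp_le_two_mul_exp_of_le_add_half ?_)
  have := sub_one_div_two_le_sq_div hℓ0 (Nat.cast_pos.2 (Nat.choose_pos (by omega))) hb hgap hsq
  linarith

/-- Lemma 3.4 (lem:McDAppl): degree of a fixed `d`-set into a uniformly random `ℓ`-set
is concentrated. -/
theorem stmt_4 (k d : ℕ) (hd1 : 1 ≤ d) (hdk : d < k) (δ δ' : ℝ)
    (h0 : 0 < δ') (h1 : δ' < δ) (h2 : δ < 1) :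
    ∃ N : ℕ, ∀ n ℓ : ℕ, N ≤ n → N ≤ ℓ → ℓ ≤ n →
      ∀ H : Finset (Finset (Fin n)), (∀ e ∈ H, e.card = k) →
        (∀ S : Finset (Fin n), S.card = d →
          δ * (n : ℝ) ^ (k - d) ≤
            ((((Finset.univ : Finset (Fin n)).powersetCard (k - d)).filter
              (fun W => S ∪ W ∈ H)).card : ℝ)) →
        ∀ T : Finset (Fin n), T.card = d →
          ((((Finset.univ : Finset (Fin n)).powersetCard ℓ).filter
              (fun A => (((A.powersetCard (k - d)).filter
                (fun W => T ∪ W ∈ H)).card : ℝ) < δ' * (ℓ : ℝ) ^ (k - d))).card : ℝ) /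
            ((((Finset.univ : Finset (Fin n)).powersetCard ℓ).card : ℝ)) ≤
            2 * Real.exp (-(ℓ : ℝ) * (δ - δ') ^ 2 / 2) :=
  stmt_4_general k d hdk δ δ' h0 h1 h2
end

section
/- Let $1/n\ll\alpha,\beta$ and $m\le n^2$. Let $t\in\mathbb{N}$ and integers $n_1,\dots,n_t\ge\beta n$ with $\sum_{i=1}^t n_i=n$. Let $(H_1,\dots,H_m)$ be a collection of $k$-uniform hypergraphs on $[n]$, each with minimum $d$-degree at least $(\delta+\alpha)n^{k-d}$. Then there exists a partition of $[n]$ into sets $V_1,\dots,V_t$ with $|V_i|=n_i$ such that for every $d$-set $S\subseteq[n]$, every $i\in[t]$, and every $j\in[m]$, the number of $(k-d)$-subsets $W\subseteq V_i$ with $S\cup W\in E(H_j)$ is at least $(\delta+\alpha/2)n_i^{k-d}$. -/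
/-!
Count ordered partitions with the prescribed part sizes instead of sampling one. Permutations of
the ground set act on them, so the `i`-th part is equidistributed over all `ns i`-subsets, and the
number of partitions whose `i`-th part `V` meets a fixed set `A` in fewer than
`|V||A|/n - η|V|` vertices is governed by the lower tail of the hypergeometric distribution. Below
its mean, consecutive hypergeometric terms grow by a factor `1 + η/2`, so the tail is at most
`n ^ (-D)`, and a union bound yields a partition whose parts meet proportionally every one of the
polynomially many level sets `{v | θ ≤ deg(T ∪ {v})}`. Summing over the thresholds `θ` turns this
into proportional weighted sums, and the double count
`(e + 1) deg_V(T) = ∑ v ∈ V, deg_V(T ∪ {v})` carries the bound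
`deg_V(T) ≥ (|V|/n)^e deg(T) - e η |V|^e` by induction on the number `e` of missing vertices.
-/

open Finset
open scoped Pointwise

theorem Finset.exists_mem_forall_not_of_sum_card_filter_lt {α κ : Type*} {s : Finset α}
    {I : Finset κ} (E : κ → α → Prop) [∀ x, DecidablePred (E x)]
    (h : ∑ x ∈ I, #{a ∈ s | E x a} < #s) : ∃ a ∈ s, ∀ x ∈ I, ¬E x a := by
  classical
  by_contra! hcon
  have : s ⊆ I.biUnion fun x => {a ∈ s | E x a} := fun a ha => by
    obtain ⟨x, hx, hE⟩ := hcon a ha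
    exact mem_biUnion.2 ⟨x, hx, mem_filter.2 ⟨ha, hE⟩⟩
  exact (card_le_card this |>.trans card_biUnion_le).not_gt h

theorem sum_card_filter_le_eq_sum {α : Type*} (s : Finset α) (c : α → ℕ) {M : ℕ}
    (hc : ∀ v ∈ s, c v ≤ M) : ∑ θ ∈ Icc 1 M, #{v ∈ s | θ ≤ c v} = ∑ v ∈ s, c v := by
  refine (sum_card_bipartiteAbove_eq_sum_card_bipartiteBelow (fun θ v => θ ≤ c v)).trans
    (sum_congr rfl fun v hv => ?_)
  have : bipartiteBelow (fun θ v => θ ≤ c v) (Icc 1 M) v = Icc 1 (c v) := by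
    ext θ
    simp only [bipartiteBelow, mem_filter, mem_Icc]
    have := hc v hv
    omega
  rw [this, Nat.card_Icc, Nat.add_sub_cancel]

/-- `(a - j) (q - j) / ((j + 1) (n - a - q + j + 1))` is the ratio of consecutive terms of the
hypergeometric distribution; at distance `x` below its mean `q a / n` it exceeds `1 + ε`. -/
theorem hypergeometric_ratio_bound {n a q j ε x : ℝ} (ha : 0 ≤ a) (han : a ≤ n) (hq : 0 ≤ q)
    (hqn : q ≤ n) (hj : 0 ≤ j) (hε : 0 ≤ ε) (hε1 : ε ≤ 1) (hεx : ε * q ≤ x)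
    (hx : 2 * (n + 1) ≤ x ^ 2) (hjx : j ≤ q * a / n - x) :
    (1 + ε) * ((j + 1) * (n - a - q + j + 1)) ≤ (a - j) * (q - j) := by
  have hx0 : 0 ≤ x := (mul_nonneg hε hq).trans hεx
  have hn : 0 < n := by
    by_contra! h
    have : n = 0 := by linarith
    simp only [this, div_zero] at hjx hx
    nlinarith
  set μ := q * a / n
  have hμ : μ * n = q * a := div_mul_cancel₀ _ hn.ne'
  set P := a - μ
  set Q := q - μ
  set R := n - a - q + μ
  have hP : 0 ≤ P := by nlinarith
  have hQ : 0 ≤ Q := by nlinarith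
  have hR : 0 ≤ R := by nlinarith [mul_nonneg (sub_nonneg.2 han) (sub_nonneg.2 hqn)]
  have hμR : μ * R = P * Q := by linear_combination hμ
  have haj : P + x ≤ a - j := by linarith
  have hqj : Q + x ≤ q - j := by linarith
  rcases le_or_gt (n - a - q + j + 1) 0 with hneg | hpos
  · have h1 : (j + 1) * (n - a - q + j + 1) ≤ 0 := mul_nonpos_of_nonneg_of_nonpos (by linarith) hneg
    exact (mul_nonpos_of_nonneg_of_nonpos (by linarith) h1).trans
      (mul_nonneg (by linarith) (by linarith))
  have hμ0 : 0 ≤ μ := by positivity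
  calc (1 + ε) * ((j + 1) * (n - a - q + j + 1))
      ≤ (1 + ε) * ((μ + 1) * (R + 1)) := by gcongr <;> linarith
    _ = μ * R + ε * (P * Q) + (1 + ε) * (μ + R + 1) := by linear_combination ε * hμR
    _ ≤ P * Q + x * P + x ^ 2 := by
        have : ε * (P * Q) ≤ x * P := by
          nlinarith [mul_le_mul_of_nonneg_left (show Q ≤ q by linarith) hP]
        nlinarith
    _ ≤ (P + x) * (Q + x) := by nlinarith
    _ ≤ (a - j) * (q - j) := mul_le_mul haj hqj (by linarith) (by linarith)

theorem one_add_mul_choose_mul_choose_le {a b q j : ℕ} {ε x : ℝ} (hq : q ≤ a + b) (hε : 0 ≤ ε)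
    (hε1 : ε ≤ 1) (hεx : ε * q ≤ x) (hx : 2 * ((a + b : ℕ) + 1) ≤ x ^ 2)
    (hjx : (j : ℝ) ≤ q * a / (a + b : ℕ) - x) :
    (1 + ε) * (a.choose j * b.choose (q - j) : ℕ) ≤
      (a.choose (j + 1) * b.choose (q - (j + 1)) : ℕ) := by
  have hqR : (q : ℝ) ≤ (a + b : ℕ) := by exact_mod_cast hq
  have key := hypergeometric_ratio_bound (Nat.cast_nonneg a) (by push_cast; linarith)
    (Nat.cast_nonneg q) hqR (Nat.cast_nonneg j) hε hε1 hεx hx hjx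
  have hx0 : 0 < x := by nlinarith [(mul_nonneg hε (Nat.cast_nonneg q)).trans hεx]
  have hn : (0 : ℝ) < (a + b : ℕ) := by
    rcases (Nat.cast_nonneg (α := ℝ) (a + b)).eq_or_lt with h | h
    · rw [← h, div_zero] at hjx
      linarith [Nat.cast_nonneg (α := ℝ) j]
    · exact h
  have hja : j < a := by
    have : (q : ℝ) * a / (a + b : ℕ) ≤ a := by
      rw [div_le_iff₀ hn, mul_comm (a : ℝ)]
      exact mul_le_mul_of_nonneg_right hqR (Nat.cast_nonneg a)
    exact_mod_cast (show (j : ℝ) < a by linarith)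
  have hjq : j < q := by
    have : (q : ℝ) * a / (a + b : ℕ) ≤ q := by
      rw [div_le_iff₀ hn]
      exact mul_le_mul_of_nonneg_left (by push_cast; linarith [Nat.cast_nonneg (α := ℝ) b])
        (Nat.cast_nonneg q)
    exact_mod_cast (show (j : ℝ) < q by linarith)
  obtain ⟨p, rfl⟩ := Nat.exists_eq_add_of_lt hjq
  rw [show j + p + 1 - j = p + 1 by omega, show j + p + 1 - (j + 1) = p by omega]
  have hA : (a.choose (j + 1) : ℝ) * (j + 1) = a.choose j * (a - j) := by
    rw [← Nat.cast_sub hja.le]; exact_mod_cast Nat.choose_succ_right_eq a j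
  have hB : (b.choose (p + 1) : ℝ) * (p + 1) = b.choose p * (b - p : ℕ) := by
    exact_mod_cast Nat.choose_succ_right_eq b p
  have hratio : (1 + ε) * ((j + 1) * (b - p : ℕ)) ≤ (a - j) * (p + 1 : ℝ) := by
    rcases le_or_gt p b with h | h
    · rw [Nat.cast_sub h]
      convert key using 3 <;> push_cast <;> ring
    · rw [Nat.sub_eq_zero_of_le h.le, Nat.cast_zero, mul_zero, mul_zero]
      exact mul_nonneg (by linarith [(Nat.cast_lt (α := ℝ)).2 hja]) (by positivity)
  refine le_of_mul_le_mul_right ?_ (by positivity : (0 : ℝ) < (j + 1) * (p + 1))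
  push_cast
  calc (1 + ε) * (a.choose j * b.choose (p + 1)) * ((j + 1) * (p + 1))
      = (1 + ε) * ((j + 1) * (b - p : ℕ)) * (a.choose j * b.choose p) := by
        linear_combination (1 + ε) * (j + 1) * a.choose j * hB
    _ ≤ (a - j) * (p + 1 : ℝ) * (a.choose j * b.choose p) := by gcongr
    _ = a.choose (j + 1) * b.choose p * ((j + 1) * (p + 1)) := by
        linear_combination -(p + 1) * b.choose p * hA

theorem choose_mul_choose_le_choose {a b q j : ℕ} (hj : j ≤ q) :
    a.choose j * b.choose (q - j) ≤ (a + b).choose q := by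
  rw [Nat.add_choose_eq]
  have hmem : (j, q - j) ∈ antidiagonal q := mem_antidiagonal.2 (Nat.add_sub_cancel' hj)
  exact single_le_sum (f := fun ij : ℕ × ℕ => a.choose ij.1 * b.choose ij.2)
    (fun _ _ => Nat.zero_le _) hmem

section Hypergeometric

variable {α : Type*} [DecidableEq α] [Fintype α]

theorem card_filter_card_inter_eq_le (A : Finset α) (q j : ℕ) :
    #{V ∈ powersetCard q univ | #(V ∩ A) = j} ≤
      (#A).choose j * (Fintype.card α - #A).choose (q - j) := by
  rw [← card_compl, ← card_powersetCard, ← card_powersetCard, ← card_product]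
  refine card_le_card_of_injOn (fun V => (V ∩ A, V \ A)) (fun V hV => ?_) (fun V _ W _ h => ?_)
  · simp only [mem_coe, mem_filter, mem_powersetCard_univ] at hV
    simp only [coe_product, Set.mem_prod, mem_coe, mem_powersetCard]
    refine ⟨⟨inter_subset_right, hV.2⟩, fun x hx => ?_, ?_⟩
    · simpa using (mem_sdiff.1 hx).2
    · have := card_sdiff_add_card_inter V A
      omega
  · simp only [Prod.mk.injEq] at h
    rw [← sdiff_union_inter V A, ← sdiff_union_inter W A, h.1, h.2]

def Represents (η : ℝ) (V A : Finset α) : Prop :=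
  (#V : ℝ) / Fintype.card α * #A - η * #V ≤ #(V ∩ A)

noncomputable instance (η : ℝ) (V A : Finset α) : Decidable (Represents η V A) :=
  inferInstanceAs (Decidable (_ ≤ _))

theorem card_filter_card_inter_eq_mul_pow_le_choose (A : Finset α) {q j : ℕ}
    (hq : q ≤ Fintype.card α) {η : ℝ} (hη : 0 < η) (hη2 : η ≤ 2)
    (hbig : 8 * ((Fintype.card α : ℝ) + 1) ≤ (η * q) ^ 2)
    (hj : (j : ℝ) < q / Fintype.card α * #A - η * q) :
    (#{V ∈ powersetCard q univ | #(V ∩ A) = j} : ℝ) * (1 + η / 2) ^ ⌊η * q / 2⌋₊ ≤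
      (Fintype.card α).choose q := by
  set n := Fintype.card α
  set M := ⌊η * q / 2⌋₊
  set h : ℕ → ℝ := fun j => ((#A).choose j * (n - #A).choose (q - j) : ℕ)
  have hab : #A + (n - #A) = n := Nat.add_sub_cancel' (card_le_univ A)
  have hqpos : (0 : ℝ) < q := by
    rcases (Nat.cast_nonneg (α := ℝ) q).eq_or_lt with h | h
    · rw [← h, mul_zero] at hbig; nlinarith [Nat.cast_nonneg (α := ℝ) n]
    · exact h
  have hqA : (q : ℝ) / n * #A ≤ q := by
    rw [div_mul_eq_mul_div, div_le_iff₀ (hqpos.trans_le (by exact_mod_cast hq))]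
    exact mul_le_mul_of_nonneg_left (by exact_mod_cast card_le_univ A) hqpos.le
  have hM : (M : ℝ) ≤ η * q / 2 := Nat.floor_le (by positivity)
  have hgeom : (1 + η / 2) ^ M * h j ≤ h (j + M) := by
    refine geom_le (u := fun i => h (j + i)) (by positivity) M fun i hi => ?_
    have hi' : (i : ℝ) < M := by exact_mod_cast hi
    have := one_add_mul_choose_mul_choose_le (a := #A) (b := n - #A) (j := j + i) (ε := η / 2)
      (x := η * q / 2) (hab.symm ▸ hq) (by positivity) (by linarith) (by linarith)
      (by rw [hab]; nlinarith) (by rw [hab, ← div_mul_eq_mul_div]; push_cast; linarith)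
    simpa [h, add_assoc] using this
  have hend : h (j + M) ≤ n.choose q := by
    have hjM : j + M ≤ q := by exact_mod_cast (show (j : ℝ) + M ≤ q by linarith)
    simp only [h]
    exact_mod_cast hab ▸ choose_mul_choose_le_choose hjM
  calc (#{V ∈ powersetCard q univ | #(V ∩ A) = j} : ℝ) * (1 + η / 2) ^ M
      ≤ (1 + η / 2) ^ M * h j := by
        rw [mul_comm]; gcongr; simp only [h]; exact_mod_cast card_filter_card_inter_eq_le A q j
    _ ≤ n.choose q := hgeom.trans hend

theorem card_not_represents_mul_pow_le (A : Finset α) {q : ℕ} (hq : q ≤ Fintype.card α) {η : ℝ}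
    (hη : 0 < η) (hη2 : η ≤ 2) (hbig : 8 * ((Fintype.card α : ℝ) + 1) ≤ (η * q) ^ 2) :
    (#{V ∈ powersetCard q univ | ¬Represents η V A} : ℝ) * (1 + η / 2) ^ ⌊η * q / 2⌋₊ ≤
      (q + 1) * (Fintype.card α).choose q := by
  set bad := {V ∈ powersetCard q (univ : Finset α) | ¬Represents η V A}
  have hfiber : ∀ j ∈ range (q + 1), (#{V ∈ bad | #(V ∩ A) = j} : ℝ) *
      (1 + η / 2) ^ ⌊η * q / 2⌋₊ ≤ (Fintype.card α).choose q := fun j _ => by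
    by_cases hj : (j : ℝ) < q / Fintype.card α * #A - η * q
    · refine le_trans ?_ (card_filter_card_inter_eq_mul_pow_le_choose A hq hη hη2 hbig hj)
      gcongr
      exact filter_subset _ _
    · have hempty : {V ∈ bad | #(V ∩ A) = j} = ∅ := by
        refine filter_eq_empty_iff.2 fun V hV hVj => hj ?_
        simp only [bad, mem_filter, mem_powersetCard_univ, Represents, not_le] at hV
        rw [← hVj, ← hV.1]
        exact hV.2
      rw [hempty, card_empty, Nat.cast_zero, zero_mul]
      positivity
  calc (#bad : ℝ) * (1 + η / 2) ^ ⌊η * q / 2⌋₊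
      = ∑ j ∈ range (q + 1), (#{V ∈ bad | #(V ∩ A) = j} : ℝ) * (1 + η / 2) ^ ⌊η * q / 2⌋₊ := by
        rw [← sum_mul, card_eq_sum_card_fiberwise (f := fun V => #(V ∩ A)) (t := range (q + 1))]
        · push_cast; rfl
        · intro V hV
          simp only [bad, mem_coe, mem_filter, mem_powersetCard_univ] at hV
          exact mem_range.2 (Nat.lt_succ_of_le (hV.1 ▸ card_le_card inter_subset_left))
    _ ≤ ∑ j ∈ range (q + 1), ((Fintype.card α).choose q : ℝ) := sum_le_sum hfiber
    _ = (q + 1) * (Fintype.card α).choose q := by simp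

end Hypergeometric

open Filter in
theorem eventually_pow_le_pow_floor {c γ : ℝ} (hc : 0 < c) (hγ : 0 < γ) (D : ℕ) :
    ∀ᶠ n : ℕ in atTop, ((n : ℝ) + 1) ^ D ≤ (1 + c) ^ ⌊γ * n⌋₊ := by
  set r := 1 + c
  have hr : 1 < r := by linarith
  have hs : 1 < r ^ γ := Real.one_lt_rpow hr hγ
  filter_upwards [(isLittleO_pow_const_const_pow_of_one_lt (R := ℝ) D hs).bound
    (by positivity : (0 : ℝ) < 1 / (2 ^ D * r)), eventually_ge_atTop 1] with n hn hn1
  have hn1' : (1 : ℝ) ≤ n := by exact_mod_cast hn1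
  simp only [Real.norm_eq_abs, abs_pow, Nat.abs_cast, abs_of_pos (by positivity : 0 < r ^ γ)]
    at hn
  calc ((n : ℝ) + 1) ^ D ≤ 2 ^ D * (n : ℝ) ^ D := by
        rw [← mul_pow]; gcongr; linarith
    _ ≤ 2 ^ D * (1 / (2 ^ D * r) * (r ^ γ) ^ n) := by gcongr
    _ = r ^ (γ * n - 1) := by
        rw [Real.rpow_sub_one (by positivity), Real.rpow_mul_natCast (by positivity)]
        field_simp
    _ ≤ r ^ ⌊γ * n⌋₊ := by
        rw [← Real.rpow_natCast]
        exact Real.rpow_le_rpow_of_exponent_le hr.le (Nat.sub_one_lt_floor _).le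

open Filter in
theorem eventually_card_not_represents_mul_pow_le {η β : ℝ} (hη : 0 < η) (hη2 : η ≤ 2)
    (hβ : 0 < β) (D : ℕ) :
    ∀ᶠ n : ℕ in atTop, ∀ q : ℕ, q ≤ n → β * n ≤ q → ∀ A : Finset (Fin n),
      #{V ∈ powersetCard q univ | ¬Represents η V A} * n ^ D ≤ n.choose q := by
  filter_upwards [eventually_pow_le_pow_floor (c := η / 2) (γ := η * β / 2) (by positivity)
    (by positivity) (D + 1), eventually_ge_atTop ⌈16 / (η * β) ^ 2⌉₊, eventually_ge_atTop 1]
    with n hgrowth hlarge hn1 q hqn hβq A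
  have hn1' : (1 : ℝ) ≤ n := by exact_mod_cast hn1
  have hqn' : (q : ℝ) ≤ n := by exact_mod_cast hqn
  have hbig : 8 * ((Fintype.card (Fin n) : ℝ) + 1) ≤ (η * q) ^ 2 := by
    have h16 : 16 ≤ (η * β) ^ 2 * n := by
      rw [← div_le_iff₀' (by positivity)]; exact (Nat.ceil_le.1 hlarge)
    have : (η * β * n) ^ 2 ≤ (η * q) ^ 2 := by
      have := mul_le_mul_of_nonneg_left hβq hη.le
      exact pow_le_pow_left₀ (by positivity) (by linarith) 2
    rw [Fintype.card_fin]
    nlinarith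
  have htail := card_not_represents_mul_pow_le A (by rwa [Fintype.card_fin]) hη hη2 hbig
  rw [Fintype.card_fin] at htail
  have hpoly : ((q : ℝ) + 1) * n ^ D ≤ (1 + η / 2) ^ ⌊η * q / 2⌋₊ := by
    calc ((q : ℝ) + 1) * n ^ D ≤ ((n : ℝ) + 1) ^ (D + 1) := by
          rw [pow_succ']; gcongr; linarith
      _ ≤ (1 + η / 2) ^ ⌊η * β / 2 * n⌋₊ := hgrowth
      _ ≤ (1 + η / 2) ^ ⌊η * q / 2⌋₊ := by
          gcongr
          · linarith
          · linarith [mul_le_mul_of_nonneg_left hβq hη.le]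
  have : ((#{V ∈ powersetCard q univ | ¬Represents η V A} * n ^ D : ℕ) : ℝ) * (q + 1) ≤
      (n.choose q : ℝ) * (q + 1) := by
    push_cast
    calc _ = (#{V ∈ powersetCard q univ | ¬Represents η V A} : ℝ) * ((q + 1) * n ^ D) := by ring
      _ ≤ _ := by gcongr
      _ ≤ _ := htail.trans_eq (mul_comm _ _)
  exact_mod_cast le_of_mul_le_mul_right this (by positivity)

section OrderedPartitions

variable {ι α : Type*} [Fintype ι] [DecidableEq ι] [Fintype α] [DecidableEq α]

def orderedPartitions (ns : ι → ℕ) : Finset (ι → Finset α) :=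
  {V | (∀ i, #(V i) = ns i) ∧ (∀ i j, i ≠ j → Disjoint (V i) (V j)) ∧ ∀ v, ∃ i, v ∈ V i}

variable {ns : ι → ℕ}

theorem mem_orderedPartitions {V : ι → Finset α} :
    V ∈ orderedPartitions ns ↔
      (∀ i, #(V i) = ns i) ∧ (∀ i j, i ≠ j → Disjoint (V i) (V j)) ∧ ∀ v, ∃ i, v ∈ V i := by
  simp [orderedPartitions]

theorem smul_mem_orderedPartitions (σ : Equiv.Perm α) {V : ι → Finset α}
    (hV : V ∈ orderedPartitions ns) : σ • V ∈ orderedPartitions ns := by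
  obtain ⟨hcard, hdisj, hcover⟩ := mem_orderedPartitions.1 hV
  refine mem_orderedPartitions.2 ⟨fun i => ?_, fun i j hij => ?_, fun v => ?_⟩
  · rw [Pi.smul_apply, card_smul_finset, hcard]
  · simp only [Pi.smul_apply, disjoint_left, ← inv_smul_mem_iff]
    exact fun _ ha => disjoint_left.1 (hdisj i j hij) ha
  · obtain ⟨i, hi⟩ := hcover (σ⁻¹ • v)
    exact ⟨i, inv_smul_mem_iff.1 hi⟩

theorem orderedPartitions_nonempty (hsum : ∑ i, ns i = Fintype.card α) :
    (orderedPartitions (α := α) ns).Nonempty := by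
  let e : (Σ i, Fin (ns i)) ≃ α := Fintype.equivOfCardEq (by simp [hsum])
  refine ⟨fun i => univ.map ((Function.Embedding.sigmaMk i).trans e.toEmbedding),
    mem_orderedPartitions.2 ⟨fun i => by simp, fun i j hij => ?_, fun v => ?_⟩⟩
  · simp only [disjoint_left, mem_map, mem_univ, true_and, Function.Embedding.trans_apply,
      Function.Embedding.sigmaMk_apply, Equiv.coe_toEmbedding, not_exists, forall_exists_index]
    rintro _ x rfl y h
    exact hij (congrArg Sigma.fst (e.injective h)).symm
  · exact ⟨(e.symm v).1, mem_map.2 ⟨(e.symm v).2, mem_univ _, by simp⟩⟩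

theorem card_filter_orderedPartitions_apply_eq {i : ι} {V V' : Finset α} (h : #V = #V') :
    #{c ∈ orderedPartitions ns | c i = V} = #{c ∈ orderedPartitions ns | c i = V'} := by
  have := Set.powersetCard.isPretransitive (α := α) (n := #V)
  obtain ⟨σ, hσ⟩ := MulAction.exists_smul_eq (Equiv.Perm α)
    (⟨V, rfl⟩ : Set.powersetCard α #V) ⟨V', h.symm⟩
  replace hσ : σ • V = V' := congrArg Subtype.val hσ
  rw [← card_smul_finset σ]
  congr 1
  ext c
  simp only [mem_smul_finset, mem_filter]
  constructor
  · rintro ⟨c, ⟨hc, rfl⟩, rfl⟩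
    exact ⟨smul_mem_orderedPartitions σ hc, hσ⟩
  · rintro ⟨hc, rfl⟩
    refine ⟨σ⁻¹ • c, ⟨smul_mem_orderedPartitions σ⁻¹ hc, ?_⟩, smul_inv_smul σ c⟩
    rw [Pi.smul_apply, ← hσ, inv_smul_smul]

theorem card_filter_orderedPartitions_mul_choose (i : ι) (P : Finset α → Prop)
    [DecidablePred P] :
    #{c ∈ orderedPartitions ns | P (c i)} * (Fintype.card α).choose (ns i) =
      #{V ∈ powersetCard (ns i) univ | P V} * #(orderedPartitions (α := α) ns) := by
  set Ω := orderedPartitions (α := α) ns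
  set F : Finset α → ℕ := fun V => #{c ∈ Ω | c i = V}
  have hmaps : ∀ c ∈ Ω, c i ∈ powersetCard (ns i) univ := fun c hc =>
    mem_powersetCard_univ.2 ((mem_orderedPartitions.1 hc).1 i)
  have hP : #{c ∈ Ω | P (c i)} = ∑ V ∈ powersetCard (ns i) univ with P V, F V := by
    rw [card_eq_sum_card_fiberwise (f := fun c => c i)
      (fun c hc => mem_filter.2 ⟨hmaps c (mem_filter.1 hc).1, (mem_filter.1 hc).2⟩)]
    refine sum_congr rfl fun V hV => congrArg card ?_
    ext c
    simp only [mem_filter, and_assoc]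
    exact ⟨fun h => ⟨h.1, h.2.2⟩, fun h => ⟨h.1, h.2 ▸ (mem_filter.1 hV).2, h.2⟩⟩
  have hΩ : #Ω = ∑ V ∈ powersetCard (ns i) univ, F V := card_eq_sum_card_fiberwise hmaps
  rw [hP, hΩ, ← card_univ, ← card_powersetCard, card_eq_sum_ones {V ∈ _ | P V}, sum_mul,
    sum_mul]
  refine sum_congr rfl fun V hV => ?_
  rw [one_mul, mul_comm, ← smul_eq_mul, ← sum_const]
  refine sum_congr rfl fun V' hV' => card_filter_orderedPartitions_apply_eq ?_
  rw [(mem_powersetCard_univ.1 (mem_filter.1 hV).1), mem_powersetCard_univ.1 hV']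

theorem exists_mem_orderedPartitions_forall_represents (hsum : ∑ i, ns i = Fintype.card α)
    (𝒜 : Finset (Finset α)) (η : ℝ) (N : ℕ)
    (htail : ∀ i, ∀ A ∈ 𝒜, #{V ∈ powersetCard (ns i) univ | ¬Represents η V A} * N ≤
      (Fintype.card α).choose (ns i))
    (hcard : Fintype.card ι * #𝒜 < N) :
    ∃ c ∈ orderedPartitions ns, ∀ i, ∀ A ∈ 𝒜, Represents η (c i) A := by
  have hsym := fun i (A : Finset α) =>
    card_filter_orderedPartitions_mul_choose (ns := ns) i (fun V => ¬Represents η V A)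
  set Ω := orderedPartitions (α := α) ns
  have hΩ : 0 < #Ω := card_pos.2 (orderedPartitions_nonempty hsum)
  have hbad : ∀ i, ∀ A ∈ 𝒜, #{c ∈ Ω | ¬Represents η (c i) A} * N ≤ #Ω := fun i A hA => by
    have hns : ns i ≤ Fintype.card α :=
      hsum ▸ single_le_sum (fun _ _ => Nat.zero_le _) (mem_univ i)
    refine Nat.le_of_mul_le_mul_right ?_ (Nat.choose_pos hns)
    calc #{c ∈ Ω | ¬Represents η (c i) A} * N * (Fintype.card α).choose (ns i)
        = #{V ∈ powersetCard (ns i) univ | ¬Represents η V A} * N * #Ω := by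
          rw [mul_right_comm, hsym, mul_right_comm]
      _ ≤ (Fintype.card α).choose (ns i) * #Ω := Nat.mul_le_mul_right _ (htail i A hA)
      _ = #Ω * (Fintype.card α).choose (ns i) := mul_comm _ _
  obtain ⟨c, hc, hgood⟩ := exists_mem_forall_not_of_sum_card_filter_lt (s := Ω)
    (I := univ ×ˢ 𝒜) (fun x c => ¬Represents η (c x.1) x.2) <| by
      refine Nat.lt_of_mul_lt_mul_right (a := N) ?_
      calc (∑ x ∈ univ ×ˢ 𝒜, #{c ∈ Ω | ¬Represents η (c x.1) x.2}) * N
          ≤ ∑ _x ∈ univ ×ˢ 𝒜, #Ω := by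
            rw [sum_mul]
            exact sum_le_sum fun x hx => hbad x.1 x.2 (mem_product.1 hx).2
        _ = Fintype.card ι * #𝒜 * #Ω := by rw [sum_const, card_product, card_univ, smul_eq_mul]
        _ < #Ω * N := (Nat.mul_lt_mul_of_pos_right hcard hΩ).trans_eq (mul_comm _ _)
  exact ⟨c, hc, fun i A hA => not_not.1 (hgood (i, A) (mem_product.2 ⟨mem_univ i, hA⟩))⟩

end OrderedPartitions

theorem div_card_pow_mul_card_pow {α : Type*} [Fintype α] (V : Finset α) (e : ℕ) :
    ((#V : ℝ) / Fintype.card α) ^ e * (Fintype.card α : ℝ) ^ e = (#V : ℝ) ^ e := by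
  rw [← mul_pow, div_mul_cancel_of_imp fun h => ?_]
  exact_mod_cast Nat.eq_zero_of_le_zero ((card_le_univ V).trans (Nat.cast_eq_zero.1 h).le)

section LinkDegree

variable {α : Type*} [DecidableEq α]

/-- The paper's `deg_G(T, U)` when `G` is `(#T + e)`-uniform. -/
def linkDegree (G : Finset (Finset α)) (T U : Finset α) (e : ℕ) : ℕ :=
  #{W ∈ powersetCard e U | T ∪ W ∈ G}

variable {G : Finset (Finset α)} {k : ℕ}

theorem linkDegree_zero (G : Finset (Finset α)) (T U : Finset α) :
    linkDegree G T U 0 = if T ∈ G then 1 else 0 := by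
  by_cases h : T ∈ G <;> simp [linkDegree, filter_singleton, h]

theorem linkDegree_eq_zero_of_card_add_lt (hG : ∀ e ∈ G, #e = k) {T U : Finset α} {e : ℕ}
    (h : #T + e < k) : linkDegree G T U e = 0 := by
  refine card_eq_zero.2 (filter_eq_empty_iff.2 fun W hW hTW => ?_)
  have := (card_union_le T W).trans_lt (by rwa [(mem_powersetCard.1 hW).2])
  exact this.ne (hG _ hTW)

theorem card_filter_mem_eq_linkDegree_insert (hG : ∀ e ∈ G, #e = k) {T U : Finset α} {e : ℕ}
    (hT : #T + e + 1 = k) {v : α} (hv : v ∈ U) :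
    #{W ∈ powersetCard (e + 1) U | T ∪ W ∈ G ∧ v ∈ W} = linkDegree G (insert v T) U e := by
  have hvW : ∀ W ∈ powersetCard e U, insert v T ∪ W ∈ G → v ∉ W := fun W hW hG' hvW => by
    have hcard := hG _ hG'
    rw [insert_union, insert_eq_of_mem (mem_union_right T hvW)] at hcard
    have := card_union_le T W
    rw [(mem_powersetCard.1 hW).2] at this
    omega
  refine card_nbij' (fun W => W.erase v) (insert v) (fun W hW => ?_) (fun W hW => ?_)
    (fun W hW => ?_) (fun W hW => ?_)
  · simp only [mem_coe, mem_filter, mem_powersetCard] at hW ⊢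
    obtain ⟨⟨hWU, hWc⟩, hTW, hvW⟩ := hW
    refine ⟨⟨(erase_subset v W).trans hWU, by rw [card_erase_of_mem hvW, hWc]; rfl⟩, ?_⟩
    rwa [insert_union, ← union_insert, insert_erase hvW]
  · simp only [mem_coe, mem_filter, mem_powersetCard] at hW ⊢
    have := hvW W (mem_powersetCard.2 hW.1) hW.2
    refine ⟨⟨insert_subset hv hW.1.1, by rw [card_insert_of_notMem this, hW.1.2]⟩, ?_,
      mem_insert_self v W⟩
    rw [union_insert, ← insert_union]
    exact hW.2
  · exact insert_erase (mem_filter.1 hW).2.2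
  · simp only [mem_coe, mem_filter] at hW
    exact erase_insert (hvW W hW.1 hW.2)

theorem sum_linkDegree_insert (hG : ∀ e ∈ G, #e = k) {T : Finset α} (U : Finset α) {e : ℕ}
    (hT : #T + e + 1 = k) :
    ∑ v ∈ U, linkDegree G (insert v T) U e = (e + 1) * linkDegree G T U (e + 1) := by
  calc ∑ v ∈ U, linkDegree G (insert v T) U e
      = ∑ v ∈ U, #{W ∈ {W ∈ powersetCard (e + 1) U | T ∪ W ∈ G} | v ∈ W} := by
        refine sum_congr rfl fun v hv => ?_
        rw [← card_filter_mem_eq_linkDegree_insert hG hT hv, filter_filter]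
    _ = ∑ W ∈ {W ∈ powersetCard (e + 1) U | T ∪ W ∈ G}, #{v ∈ U | v ∈ W} :=
        sum_card_bipartiteAbove_eq_sum_card_bipartiteBelow (fun v W => v ∈ W)
    _ = (e + 1) * linkDegree G T U (e + 1) := by
        rw [linkDegree, mul_comm, ← smul_eq_mul, ← sum_const]
        refine sum_congr rfl fun W hW => ?_
        have hW := mem_powersetCard.1 (mem_filter.1 hW).1
        rw [filter_mem_eq_inter, inter_eq_right.2 hW.1, hW.2]

variable [Fintype α]

theorem linkDegree_le_pow (G : Finset (Finset α)) (T : Finset α) (e : ℕ) :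
    linkDegree G T univ e ≤ Fintype.card α ^ e :=
  (card_filter_le _ _).trans (by rw [card_powersetCard, card_univ]; exact Nat.choose_le_pow _ _)

theorem linkDegree_univ_eq_card_filter_subset (hG : ∀ e ∈ G, #e = k) {T : Finset α}
    (hT : #T ≤ k) : linkDegree G T univ (k - #T) = #{e ∈ G | T ⊆ e} := by
  refine card_nbij' (T ∪ ·) (· \ T) (fun W hW => ?_) (fun e he => ?_) (fun W hW => ?_)
    (fun e he => ?_)
  · simp only [mem_coe, mem_filter] at hW ⊢
    exact ⟨hW.2, subset_union_left⟩
  · simp only [mem_coe, mem_filter, mem_powersetCard] at he ⊢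
    rw [card_sdiff_of_subset he.2, hG _ he.1, union_sdiff_of_subset he.2]
    exact ⟨⟨subset_univ _, rfl⟩, he.1⟩
  · simp only [mem_coe, mem_filter, mem_powersetCard] at hW
    have h := card_union_add_card_inter T W
    rw [hG _ hW.2, hW.1.2, Nat.add_sub_cancel' hT, add_eq_left, card_eq_zero] at h
    change (T ∪ W) \ T = W
    rw [union_sdiff_left, Finset.sdiff_eq_self_iff_disjoint]
    exact disjoint_iff_inter_eq_empty.2 (by rw [inter_comm, h])
  · simp only [mem_coe, mem_filter] at he
    exact union_sdiff_of_subset he.2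

theorem mul_sum_sub_le_sum_of_represents {η : ℝ} {V : Finset α} (c : α → ℕ) {M : ℕ}
    (hc : ∀ v, c v ≤ M) (h : ∀ θ ∈ Icc 1 M, Represents η V {v | θ ≤ c v}) :
    (#V : ℝ) / Fintype.card α * ∑ v, (c v : ℝ) - η * #V * M ≤ ∑ v ∈ V, (c v : ℝ) := by
  have hU : ∑ θ ∈ Icc 1 M, (#{v | θ ≤ c v} : ℝ) = ∑ v, (c v : ℝ) := by
    exact_mod_cast sum_card_filter_le_eq_sum univ c fun v _ => hc v
  have hV : ∑ θ ∈ Icc 1 M, (#{v ∈ V | θ ≤ c v} : ℝ) = ∑ v ∈ V, (c v : ℝ) := by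
    exact_mod_cast sum_card_filter_le_eq_sum V c fun v _ => hc v
  calc (#V : ℝ) / Fintype.card α * ∑ v, (c v : ℝ) - η * #V * M
      = ∑ θ ∈ Icc 1 M, ((#V : ℝ) / Fintype.card α * #{v | θ ≤ c v} - η * #V) := by
        rw [sum_sub_distrib, ← mul_sum, hU, sum_const, Nat.card_Icc, nsmul_eq_mul,
          Nat.add_sub_cancel]
        ring
    _ ≤ ∑ θ ∈ Icc 1 M, (#(V ∩ ({v | θ ≤ c v} : Finset α)) : ℝ) := sum_le_sum h
    _ = ∑ v ∈ V, (c v : ℝ) := by simp_rw [inter_filter, inter_univ, hV]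

theorem sub_le_linkDegree_of_represents (hG : ∀ e ∈ G, #e = k) {η : ℝ} (hη : 0 ≤ η)
    {V : Finset α} (hV : ∀ T e, #T + e + 1 = k → ∀ θ ∈ Icc 1 (Fintype.card α ^ e),
      Represents η V {v | θ ≤ linkDegree G (insert v T) univ e})
    (e : ℕ) {T : Finset α} (hT : #T + e = k) :
    ((#V : ℝ) / Fintype.card α) ^ e * linkDegree G T univ e - e * η * #V ^ e ≤
      linkDegree G T V e := by
  induction e generalizing T with
  | zero => simp [linkDegree_zero]
  | succ e ih =>
    have hpow := div_card_pow_mul_card_pow V e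
    set n : ℝ := (Fintype.card α : ℝ)
    set q : ℝ := (#V : ℝ)
    set c : α → ℕ := fun v => linkDegree G (insert v T) univ e
    have hT' : #T + e + 1 = k := by omega
    have hsumV : ∑ v ∈ V, (linkDegree G (insert v T) V e : ℝ) =
        (e + 1) * linkDegree G T V (e + 1) := by
      exact_mod_cast sum_linkDegree_insert hG V hT'
    have hsumU : ∑ v, (c v : ℝ) = (e + 1) * linkDegree G T univ (e + 1) := by
      exact_mod_cast sum_linkDegree_insert hG univ hT'
    have hvertex : ∀ v ∈ V, (q / n) ^ e * c v - e * η * q ^ e ≤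
        linkDegree G (insert v T) V e := fun v _ => by
      by_cases hvT : v ∈ T
      · have hcv : c v = 0 := by
          simp only [c, insert_eq_of_mem hvT]
          exact linkDegree_eq_zero_of_card_add_lt hG (by omega)
        have : (0 : ℝ) ≤ e * η * q ^ e := by positivity
        rw [hcv, Nat.cast_zero, mul_zero]
        linarith [(linkDegree G (insert v T) V e).cast_nonneg (α := ℝ)]
      · exact ih (by rw [card_insert_of_notMem hvT]; omega)
    have hlevel := mul_sum_sub_le_sum_of_represents c (fun v => linkDegree_le_pow G (insert v T) e)
      (hV T e hT')
    have hsum := sum_le_sum hvertex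
    rw [sum_sub_distrib, ← mul_sum, sum_const, nsmul_eq_mul, hsumV] at hsum
    rw [hsumU] at hlevel
    push_cast at hlevel
    have hqn : 0 ≤ q / n := by positivity
    have key : (e + 1) * ((q / n) ^ (e + 1) * linkDegree G T univ (e + 1) - η * q ^ (e + 1)) ≤
        (e + 1) * (linkDegree G T V (e + 1) : ℝ) := by
      linear_combination (q / n) ^ e * hlevel + hsum + η * q * hpow
    have hηq : 0 ≤ e * (η * q ^ (e + 1)) := by positivity
    push_cast
    nlinarith [le_of_mul_le_mul_left key (by positivity : (0 : ℝ) < e + 1)]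

theorem mul_pow_le_linkDegree_of_represents (hG : ∀ e ∈ G, #e = k) {η : ℝ} (hη : 0 ≤ η)
    {V : Finset α} (hV : ∀ T e, #T + e + 1 = k → ∀ θ ∈ Icc 1 (Fintype.card α ^ e),
      Represents η V {v | θ ≤ linkDegree G (insert v T) univ e})
    {S : Finset α} (hS : #S ≤ k) {δ : ℝ}
    (hdeg : δ * (Fintype.card α : ℝ) ^ (k - #S) ≤ #{e ∈ G | S ⊆ e}) :
    (δ - (k - #S : ℕ) * η) * (#V : ℝ) ^ (k - #S) ≤ linkDegree G S V (k - #S) := by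
  have h := sub_le_linkDegree_of_represents hG hη hV (k - #S) (T := S) (by omega)
  rw [linkDegree_univ_eq_card_filter_subset hG hS] at h
  linear_combination h + ((#V : ℝ) / Fintype.card α) ^ (k - #S) * hdeg -
    δ * div_card_pow_mul_card_pow V (k - #S)

/-- For `#T < k`, only the link size `e = k - 1 - #T` enters the degree induction. -/
def linkLevelSets {ι : Type*} [Fintype ι] (H : ι → Finset (Finset α)) (k N : ℕ) :
    Finset (Finset α) :=
  univ.biUnion fun j => ((range k).biUnion fun r => powersetCard r univ).biUnion fun T =>
    (range (N + 1)).image fun θ =>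
      ({v | θ ≤ linkDegree (H j) (insert v T) univ (k - 1 - #T)} : Finset α)

theorem mem_linkLevelSets {ι : Type*} [Fintype ι] (H : ι → Finset (Finset α)) {N : ℕ} (j : ι)
    {T : Finset α} {e θ : ℕ} (hT : #T + e + 1 = k) (hθ : θ ≤ N) :
    ({v | θ ≤ linkDegree (H j) (insert v T) univ e} : Finset α) ∈ linkLevelSets H k N := by
  simp only [linkLevelSets, mem_biUnion, mem_image, mem_range, mem_powersetCard_univ]
  exact ⟨j, mem_univ j, T, ⟨#T, by omega, rfl⟩, θ, by omega, by rw [show k - 1 - #T = e by omega]⟩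

theorem card_linkLevelSets_le {ι : Type*} [Fintype ι] (H : ι → Finset (Finset α)) (k N : ℕ) :
    #(linkLevelSets H k N) ≤ Fintype.card ι * (k * (Fintype.card α + 1) ^ k) * (N + 1) := by
  set Ts := (range k).biUnion fun r => powersetCard r (univ : Finset α)
  have hTs : #Ts ≤ k * (Fintype.card α + 1) ^ k := by
    refine (card_biUnion_le_card_mul _ _ _ fun r hr => ?_).trans_eq (by rw [card_range])
    rw [card_powersetCard, card_univ]
    exact (Nat.choose_le_pow _ _).trans ((Nat.pow_le_pow_left (Nat.le_succ _) r).trans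
      (Nat.pow_le_pow_right (Nat.succ_pos _) (mem_range.1 hr).le))
  calc #(linkLevelSets H k N) ≤ #(univ : Finset ι) * (#Ts * (N + 1)) :=
        card_biUnion_le_card_mul _ _ _ fun j _ => card_biUnion_le_card_mul _ _ _ fun T _ =>
          card_image_le.trans (card_range _).le
    _ ≤ _ := by rw [card_univ, ← mul_assoc]; gcongr

end LinkDegree

theorem mul_card_linkLevelSets_lt {m n t : ℕ} (H : Fin m → Finset (Finset (Fin n))) (k : ℕ)
    (hkn : k + 2 ≤ n) (ht : t ≤ n) (hm : m ≤ n ^ 2) :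
    t * #(linkLevelSets H k (n ^ k)) < n ^ (3 * k + 6) := by
  have hnk : 1 ≤ n ^ k := Nat.one_le_pow _ _ (by omega)
  calc t * #(linkLevelSets H k (n ^ k)) ≤ n * (n ^ 2 * (n * (n ^ 2) ^ k) * (n * n ^ k)) := by
        refine Nat.mul_le_mul ht ((card_linkLevelSets_le H k _).trans ?_)
        rw [Fintype.card_fin, Fintype.card_fin]
        gcongr
        · omega
        · nlinarith
        · nlinarith
    _ = n ^ (3 * k + 5) := by ring
    _ < n ^ (3 * k + 6) := Nat.pow_lt_pow_right (by omega) (by omega)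

theorem stmt_5_general (k d : ℕ) (hdk : d ≤ k - 1) (δ : ℝ) (α β : ℝ)
    (hα : 0 < α) (hβ : 0 < β) :
    ∃ N : ℕ, ∀ n : ℕ, N ≤ n → ∀ m : ℕ, m ≤ n ^ 2 → ∀ t : ℕ, ∀ ns : Fin t → ℕ,
      (∀ i, β * n ≤ (ns i : ℝ)) → (∑ i, ns i) = n →
      ∀ H : Fin m → Finset (Finset (Fin n)),
        (∀ j : Fin m, ∀ e ∈ H j, e.card = k) →
        (∀ j : Fin m, ∀ S : Finset (Fin n), S.card = d →
          (δ + α) * (n : ℝ) ^ (k - d) ≤ (((H j).filter (fun e => S ⊆ e)).card : ℝ)) →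
        ∃ V : Fin t → Finset (Fin n),
          (∀ i, (V i).card = ns i) ∧
          (∀ i j, i ≠ j → Disjoint (V i) (V j)) ∧
          (∀ v : Fin n, ∃ i, v ∈ V i) ∧
          ∀ S : Finset (Fin n), S.card = d → ∀ i : Fin t, ∀ j : Fin m,
            (δ + α / 2) * ((ns i : ℝ)) ^ (k - d) ≤
              ((((V i).powersetCard (k - d)).filter (fun W => S ∪ W ∈ H j)).card : ℝ) := by
  obtain ⟨η, hη, hη1, hηk⟩ : ∃ η : ℝ, 0 < η ∧ η ≤ 1 ∧ ((k - d : ℕ) : ℝ) * η ≤ α / 2 := by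
    refine ⟨min (α / (2 * (k + 1))) 1, lt_min (by positivity) one_pos, min_le_right _ _, ?_⟩
    calc ((k - d : ℕ) : ℝ) * min (α / (2 * (k + 1))) 1 ≤ (k + 1) * (α / (2 * (k + 1))) :=
          mul_le_mul (by norm_cast; omega) (min_le_left _ _) (by positivity) (by positivity)
      _ = α / 2 := by field_simp
  obtain ⟨N, hN⟩ := Filter.eventually_atTop.1
    ((eventually_card_not_represents_mul_pow_le hη (by linarith) hβ (3 * k + 6)).and
      (Filter.eventually_ge_atTop (k + 2)))
  refine ⟨N, fun n hn m hm t ns hns hsum H hH hdeg => ?_⟩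
  obtain ⟨htail, hkn⟩ := hN n hn
  have hnsn : ∀ i, ns i ≤ n := fun i => hsum ▸ single_le_sum (fun _ _ => Nat.zero_le _) (mem_univ i)
  have ht : t ≤ n := by
    have hpos : ∀ i, 1 ≤ ns i := fun i =>
      Nat.cast_pos.1 ((hns i).trans_lt' (mul_pos hβ (by norm_cast; omega)))
    simpa [hsum] using card_nsmul_le_sum univ ns 1 fun i _ => hpos i
  obtain ⟨V, hV, hrep⟩ := exists_mem_orderedPartitions_forall_represents (by simpa using hsum)
    (linkLevelSets H k (n ^ k)) η (n ^ (3 * k + 6))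
    (fun i A _ => by simpa using htail (ns i) (hnsn i) (hns i) A)
    (by simpa using mul_card_linkLevelSets_lt H k hkn ht hm)
  obtain ⟨hcard, hdisj, hcover⟩ := mem_orderedPartitions.1 hV
  refine ⟨V, hcard, hdisj, hcover, fun S hS i j => ?_⟩
  have hinherit := mul_pow_le_linkDegree_of_represents (hH j) hη.le (fun T e he θ hθ => hrep i _
    (mem_linkLevelSets H j he ((mem_Icc.1 hθ).2.trans
      (by rw [Fintype.card_fin]; exact Nat.pow_le_pow_right (by omega) (by omega)))))
    (hS ▸ (by omega : d ≤ k)) (by rw [Fintype.card_fin, hS]; exact hdeg j S hS)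
  rw [hS, hcard i] at hinherit
  exact le_trans (by gcongr; linarith) hinherit

/-- Lemma 3.5 (lem:random): the vertex set of a hypergraph collection can be partitioned
into prescribed linear-sized parts, each preserving the minimum degree condition. -/
theorem stmt_5 (k d : ℕ) (hd1 : 1 ≤ d) (hdk : d ≤ k - 1) (δ : ℝ) (α β : ℝ)
    (hα : 0 < α) (hβ : 0 < β) :
    ∃ N : ℕ, ∀ n : ℕ, N ≤ n → ∀ m : ℕ, m ≤ n ^ 2 → ∀ t : ℕ, ∀ ns : Fin t → ℕ,
      (∀ i, β * n ≤ (ns i : ℝ)) → (∑ i, ns i) = n →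
      ∀ H : Fin m → Finset (Finset (Fin n)),
        (∀ j : Fin m, ∀ e ∈ H j, e.card = k) →
        (∀ j : Fin m, ∀ S : Finset (Fin n), S.card = d →
          (δ + α) * (n : ℝ) ^ (k - d) ≤ (((H j).filter (fun e => S ⊆ e)).card : ℝ)) →
        ∃ V : Fin t → Finset (Fin n),
          (∀ i, (V i).card = ns i) ∧
          (∀ i j, i ≠ j → Disjoint (V i) (V j)) ∧
          (∀ v : Fin n, ∃ i, v ∈ V i) ∧
          ∀ S : Finset (Fin n), S.card = d → ∀ i : Fin t, ∀ j : Fin m,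
            (δ + α / 2) * ((ns i : ℝ)) ^ (k - d) ≤
              ((((V i).powersetCard (k - d)).filter (fun W => S ∪ W ∈ H j)).card : ℝ) :=
  stmt_5_general k d hdk δ α β hα hβ
end

section
/- Let $n$ be even and let $V=A\cup B$ be a partition of an $n$-vertex set into two sets of size $n/2$. Let $F$ be any graph with $m$ edges such that $F$ has no bridge (no edge whose removal increases the number of connected components). Define a graph collection $(H_1,\dots,H_m)$ on $V$ where $H_1=\dots=H_{m-1}$ is the disjoint union of a complete graph on $A$ and a complete graph on $B$, and $H_m$ is the complete bipartite graph between $A$ and $B$. Then every graph $G_i$ in the collection has minimum degree $n/2-1$ or more precisely $\delta(H_i)\ge n/2-1$ for $i<m$ and $\delta(H_m)=n/2$, yet the collection contains no transversal copy of $F$. -/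
open scoped Classical

/-! In the last colour every edge crosses between `A` and `B`, in the others none does. A
transversal copy of `F` therefore has exactly one edge crossing the cut `(A, B)`, namely the one of
the last colour. Since this edge is not a bridge of `F`, its endpoints are joined by a path of
other edges, all of which stay on one side, so both endpoints lie on the same side: a
contradiction. -/

namespace SimpleGraph

variable {V α : Type*} {G : SimpleGraph V}

theorem Reachable.apply_eq_of_forall_adj {u v : V} (f : V → α)
    (hf : ∀ x y, G.Adj x y → f x = f y) (h : G.Reachable u v) : f u = f v := by
  rw [reachable_iff_reflTransGen] at h
  simpa only [Relation.reflTransGen_eq_self] using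
    Relation.ReflTransGen.lift (p := Eq) f hf u v h

theorem apply_eq_of_not_isBridge {a b : V} (f : V → α)
    (hbr : ¬ G.IsBridge s(a, b)) (hf : ∀ x y, G.Adj x y → s(x, y) ≠ s(a, b) → f x = f y) :
    f a = f b := by
  have hreach : (G.deleteEdges {s(a, b)}).Reachable a b := of_not_not hbr
  refine hreach.apply_eq_of_forall_adj f fun x y hxy => ?_
  rw [deleteEdges_adj, Set.mem_singleton_iff] at hxy
  exact hf x y hxy.1 hxy.2

end SimpleGraph

section Halves

open Finset SimpleGraph

variable {V : Type*} [Fintype V] [DecidableEq V] {A : Finset V}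

theorem filter_adj_fromRel_iff_mem (v : V) :
    univ.filter (fun u => (fromRel fun x y => (x ∈ A ↔ y ∈ A)).Adj v u) =
      (if v ∈ A then A else Aᶜ).erase v := by
  ext u
  by_cases hv : v ∈ A <;> by_cases hu : u ∈ A <;> simp [fromRel_adj, hu, hv, eq_comm]

theorem filter_adj_fromRel_not_iff_mem (v : V) :
    univ.filter (fun u => (fromRel fun x y => ¬ (x ∈ A ↔ y ∈ A)).Adj v u) =
      if v ∈ A then Aᶜ else A := by
  ext u
  by_cases hv : v ∈ A <;> by_cases hu : u ∈ A <;> simp [fromRel_adj, hu, hv] <;>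
    (rintro rfl; contradiction)

variable {k : ℕ}

theorem card_filter_adj_fromRel_iff_mem (hA : #A = k) (hAc : #Aᶜ = k) (v : V) :
    #(univ.filter fun u => (fromRel fun x y => (x ∈ A ↔ y ∈ A)).Adj v u) = k - 1 := by
  rw [filter_adj_fromRel_iff_mem, card_erase_of_mem (by split_ifs <;> simpa), apply_ite card,
    hA, hAc, ite_self]

theorem card_filter_adj_fromRel_not_iff_mem (hA : #A = k) (hAc : #Aᶜ = k) (v : V) :
    #(univ.filter fun u => (fromRel fun x y => ¬ (x ∈ A ↔ y ∈ A)).Adj v u) = k := by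
  rw [filter_adj_fromRel_not_iff_mem, apply_ite card, hA, hAc, ite_self]

end Halves

/-- The extremal construction: two cliques on the halves for all colours but the last,
and the complete bipartite graph for the last colour. Every graph in the collection has
minimum degree at least `n/2 - 1` (and the last exactly `n/2`), yet there is no
transversal copy of any bridgeless `m`-edge graph `F`. -/
theorem stmt_9 (n m : ℕ) (hm : 0 < m)
    (A B : Finset (Fin n)) (hAB : Disjoint A B) (hABu : A ∪ B = Finset.univ)
    (hAcard : A.card = n / 2) (hBcard : B.card = n / 2)
    (F : SimpleGraph (Fin n))
    (hbridgeless : ∀ e : Sym2 (Fin n), ¬ F.IsBridge e)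
    (H : Fin m → SimpleGraph (Fin n))
    (hH1 : ∀ i : Fin m, (i : ℕ) < m - 1 →
      H i = SimpleGraph.fromRel (fun x y => (x ∈ A ↔ y ∈ A)))
    (hH2 : H ⟨m - 1, by omega⟩ = SimpleGraph.fromRel (fun x y => ¬ (x ∈ A ↔ y ∈ A))) :
    (∀ i : Fin m, (i : ℕ) < m - 1 → ∀ v : Fin n,
      n / 2 - 1 ≤ (Finset.univ.filter (fun u => (H i).Adj v u)).card) ∧
    (∀ v : Fin n,
      (Finset.univ.filter (fun u => (H ⟨m - 1, by omega⟩).Adj v u)).card = n / 2) ∧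
    ¬ ∃ (g : Fin n ↪ Fin n) (φ : Sym2 (Fin n) → Fin m),
        Set.InjOn φ ↑F.edgeFinset ∧ F.edgeFinset.image φ = Finset.univ ∧
        ∀ e ∈ F.edgeFinset, Sym2.map g e ∈ (H (φ e)).edgeSet := by
  have hAc : Aᶜ.card = n / 2 := by
    rwa [(IsCompl.of_eq hAB.eq_bot (by simpa using hABu)).compl_eq]
  refine ⟨fun i hi v => ?_, fun v => ?_, ?_⟩
  · rw [hH1 i hi]
    exact Eq.ge (by convert card_filter_adj_fromRel_iff_mem hAcard hAc v)
  · rw [hH2]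
    convert card_filter_adj_fromRel_not_iff_mem hAcard hAc v
  rintro ⟨g, φ, hinj, himg, hcol⟩
  have hlast_used : (⟨m - 1, by omega⟩ : Fin m) ∈ F.edgeFinset.image φ :=
    himg ▸ Finset.mem_univ _
  obtain ⟨e₀, he₀, hφe₀⟩ := Finset.mem_image.mp hlast_used
  induction e₀ using Sym2.ind with | _ a b => ?_
  have hsame : ∀ x y, F.Adj x y → s(x, y) ≠ s(a, b) → (g x ∈ A) = (g y ∈ A) := by
    intro x y hxy hne
    have hφ_lt : (φ s(x, y) : ℕ) < m - 1 := by
      have hφ : φ s(x, y) ≠ φ s(a, b) := fun h =>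
        hne (hinj (SimpleGraph.mem_edgeFinset.mpr hxy) he₀ h)
      rw [hφe₀, Ne, Fin.ext_iff] at hφ
      exact lt_of_le_of_ne (Nat.le_sub_one_of_lt (φ _).isLt) hφ
    have hinside := hcol s(x, y) (SimpleGraph.mem_edgeFinset.mpr hxy)
    rw [hH1 _ hφ_lt, Sym2.map_mk, SimpleGraph.mem_edgeSet, SimpleGraph.fromRel_adj] at hinside
    exact propext (by tauto)
  have hcross := hcol s(a, b) he₀
  rw [hφe₀, hH2, Sym2.map_mk, SimpleGraph.mem_edgeSet, SimpleGraph.fromRel_adj] at hcross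
  have hside := SimpleGraph.apply_eq_of_not_isBridge _ (hbridgeless _) hsame
  rw [hside] at hcross
  simp at hcross
end

section
/- For any $\alpha>0$ there exists $n_0$ such that for all $n\ge n_0$ the following holds. Let $G_1,\dots,G_n$ be graphs on $[n]$, each with minimum degree at least $(1/2+\alpha)n$. Then there is a Hamilton cycle on $[n]$ in $\bigcup_i G_i$ and a bijection $\phi$ from its edges to $[n]$ such that each edge $e$ satisfies $e\in E(G_{\phi(e)})$. -/
/-!
Fix a vertex `x`. Greedily pick vertex-disjoint edges `a b` of distinct colours `d` such that
`x b` is also an edge of colour `d`, each chosen, by double counting, so that `x a` is an edge in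
at least half of the colours not yet served; after `O(log n)` rounds every colour `c` is served,
i.e. `x a` is an edge of colour `c` for one of them. Thread these edges into a rainbow path
avoiding `x` and grow it one vertex at a time: an end with a new neighbour in an unused colour is
extended; otherwise both ends are saturated, the minimum degree gives a Pósa crossing that closes
the path into a rainbow cycle with a spare colour, and an outside vertex has enough neighbours on
the cycle in that colour to reopen it as a longer path. The crossing and the reopening can avoid
the `O(log n)` absorbing edges. At `n - 1` vertices the closed cycle leaves exactly one colour `c`
unused, and replacing the absorbing edge `a b` serving `c` by `a x b` gives the Hamilton cycle.
-/

open scoped Classical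

open Finset

namespace Function.Periodic

variable {α : Type*} {f : ℕ → α} {k : ℕ}

theorem apply_eq_of_modEq (hf : Periodic f k) {i j : ℕ} (h : i ≡ j [MOD k]) : f i = f j := by
  rw [← hf.map_mod_nat i, ← hf.map_mod_nat j, h]

theorem modEq_of_apply_eq (hf : Periodic f k) (hinj : Set.InjOn f (Set.Iio k)) (hk : 0 < k)
    {i j : ℕ} (h : f i = f j) : i ≡ j [MOD k] :=
  hinj (Nat.mod_lt i hk) (Nat.mod_lt j hk) (by rwa [hf.map_mod_nat, hf.map_mod_nat])

end Function.Periodic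

theorem Set.InjOn.ite_lt {α : Type*} {f : ℕ → α} {k : ℕ} {u : α}
    (hf : Set.InjOn f (Set.Iio k)) (hu : ∀ i < k, f i ≠ u) :
    Set.InjOn (fun i => if i < k then f i else u) (Set.Iio (k + 1)) := by
  intro i hi j hj h
  simp only [Set.mem_Iio] at hi hj
  dsimp only at h
  split_ifs at h with h₁ h₂ h₂
  · exact hf h₁ h₂ h
  · exact absurd h (hu i h₁)
  · exact absurd h.symm (hu j h₂)
  · omega

theorem Set.InjOn.bijOn_univ {n : ℕ} {f : ℕ → Fin n} (hf : Set.InjOn f (Set.Iio n)) :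
    Set.BijOn f (Set.Iio n) Set.univ := by
  refine ⟨Set.mapsTo_univ _ _, hf, fun v _ => ?_⟩
  have himage : (Finset.range n).image f = Finset.univ := eq_univ_of_card _ <| by
    rw [card_image_of_injOn (by rwa [coe_range]), Finset.card_range, Fintype.card_fin]
  obtain ⟨i, hi, rfl⟩ := Finset.mem_image.1 (himage ▸ Finset.mem_univ v)
  exact ⟨i, Finset.mem_range.1 hi, rfl⟩

namespace TransversalHamiltonCycle

variable {n : ℕ} (G : Fin n → SimpleGraph (Fin n))

noncomputable def nbhd (c v : Fin n) : Finset (Fin n) := univ.filter ((G c).Adj v)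

variable {G} in
@[simp] theorem mem_nbhd {c v u : Fin n} : u ∈ nbhd G c v ↔ (G c).Adj v u := by
  simp [nbhd]

theorem card_nbhd_lt (c v : Fin n) : #(nbhd G c v) < n := by
  calc #(nbhd G c v) ≤ #(univ.erase v) :=
        card_le_card fun u hu => mem_erase.2 ⟨((mem_nbhd.1 hu).ne).symm, mem_univ u⟩
    _ < n := by
      rw [card_erase_of_mem (mem_univ v), card_univ, Fintype.card_fin]
      exact Nat.sub_lt (Fin.pos v) one_pos

theorem exists_notMem_of_card_lt {S : Finset (Fin n)} (h : #S < n) : ∃ v, v ∉ S := by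
  obtain ⟨v, -, hv⟩ := exists_mem_notMem_of_card_lt_card (s := S) (t := univ)
    (by rwa [card_univ, Fintype.card_fin])
  exact ⟨v, hv⟩

theorem exists_pair_notMem {S : Finset (Fin n)} (h : #S + 2 ≤ n) :
    ∃ a ∉ S, ∃ b ∉ S, a ≠ b := by
  obtain ⟨a, ha, b, hb, hab⟩ := one_lt_card.1 (show 1 < #Sᶜ by
    rw [card_compl, Fintype.card_fin]
    omega)
  exact ⟨a, mem_compl.1 ha, b, mem_compl.1 hb, hab⟩

/-- A colour is the index of a graph of the collection. Only `vert i` for `i < k` and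
`colour i` for `i < k - 1` belong to the path. -/
structure RainbowPath (k : ℕ) where
  vert : ℕ → Fin n
  colour : ℕ → Fin n
  injOn_vert : Set.InjOn vert (Set.Iio k)
  injOn_colour : Set.InjOn colour (Set.Iio (k - 1))
  adj : ∀ i < k - 1, (G (colour i)).Adj (vert i) (vert (i + 1))

structure RainbowCycle (k : ℕ) where
  vert : ℕ → Fin n
  colour : ℕ → Fin n
  periodic_vert : Function.Periodic vert k
  periodic_colour : Function.Periodic colour k
  injOn_vert : Set.InjOn vert (Set.Iio k)
  injOn_colour : Set.InjOn colour (Set.Iio k)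
  adj : ∀ i, (G (colour i)).Adj (vert i) (vert (i + 1))

namespace RainbowCycle

variable {G} {k : ℕ} (Y : RainbowCycle G k)

def verts : Finset (Fin n) := (range k).image Y.vert

def colours : Finset (Fin n) := (range k).image Y.colour

def HasEdge (c : Fin n) (e : Sym2 (Fin n)) : Prop :=
  ∃ i, Y.colour i = c ∧ s(Y.vert i, Y.vert (i + 1)) = e

theorem card_verts : #Y.verts = k := by
  rw [verts, card_image_of_injOn (by rw [coe_range]; exact Y.injOn_vert), card_range]

theorem vert_mem_verts (hk : 0 < k) (i : ℕ) : Y.vert i ∈ Y.verts :=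
  mem_image.2 ⟨i % k, mem_range.2 (Nat.mod_lt _ hk), Y.periodic_vert.map_mod_nat i⟩

theorem colour_mem_colours (hk : 0 < k) (i : ℕ) : Y.colour i ∈ Y.colours :=
  mem_image.2 ⟨i % k, mem_range.2 (Nat.mod_lt _ hk), Y.periodic_colour.map_mod_nat i⟩

end RainbowCycle

namespace RainbowPath

variable {G} {k : ℕ} (X : RainbowPath G k)

def verts : Finset (Fin n) := (range k).image X.vert

def colours : Finset (Fin n) := (range (k - 1)).image X.colour

def HasEdge (c : Fin n) (e : Sym2 (Fin n)) : Prop :=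
  ∃ i < k - 1, X.colour i = c ∧ s(X.vert i, X.vert (i + 1)) = e

theorem mem_verts {v : Fin n} : v ∈ X.verts ↔ ∃ i < k, X.vert i = v := by
  simp [verts]

theorem mem_colours {c : Fin n} : c ∈ X.colours ↔ ∃ i < k - 1, X.colour i = c := by
  simp [colours]

theorem vert_mem_verts {i : ℕ} (hi : i < k) : X.vert i ∈ X.verts :=
  X.mem_verts.2 ⟨i, hi, rfl⟩

theorem colour_mem_colours {i : ℕ} (hi : i < k - 1) : X.colour i ∈ X.colours :=
  X.mem_colours.2 ⟨i, hi, rfl⟩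

theorem card_verts : #X.verts = k := by
  rw [verts, card_image_of_injOn (by simpa using X.injOn_vert), card_range]

theorem card_colours_le : #X.colours ≤ k - 1 :=
  card_image_le.trans (card_range _).le

def single (v : Fin n) : RainbowPath G 1 where
  vert _ := v
  colour _ := v
  injOn_vert i hi j hj _ := by simp_all
  injOn_colour i hi := by simp at hi
  adj i hi := by omega

theorem verts_single (v : Fin n) : (single (G := G) v).verts = {v} := by
  simp [verts, single]

def reverse : RainbowPath G k where
  vert i := X.vert (k - 1 - i)
  colour i := X.colour (k - 2 - i)
  injOn_vert i hi j hj h := by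
    simp only [Set.mem_Iio] at hi hj
    have := X.injOn_vert (Set.mem_Iio.2 (by omega)) (Set.mem_Iio.2 (by omega)) h
    omega
  injOn_colour i hi j hj h := by
    simp only [Set.mem_Iio] at hi hj
    have := X.injOn_colour (Set.mem_Iio.2 (by omega)) (Set.mem_Iio.2 (by omega)) h
    omega
  adj i hi := by
    rw [show k - 1 - (i + 1) = k - 2 - i by omega, ← show k - 2 - i + 1 = k - 1 - i by omega]
    exact (X.adj _ (by omega)).symm

theorem reverse_vert_last : X.reverse.vert (k - 1) = X.vert 0 := by
  simp [reverse]

theorem verts_reverse_subset : X.reverse.verts ⊆ X.verts := by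
  simp only [subset_iff, mem_verts]
  rintro _ ⟨i, hi, rfl⟩
  exact ⟨k - 1 - i, by omega, rfl⟩

theorem colours_reverse_subset : X.reverse.colours ⊆ X.colours := by
  simp only [subset_iff, mem_colours]
  rintro _ ⟨i, hi, rfl⟩
  exact ⟨k - 2 - i, by omega, rfl⟩

variable {X} in
theorem HasEdge.reverse {c : Fin n} {e : Sym2 (Fin n)} (h : X.HasEdge c e) :
    X.reverse.HasEdge c e := by
  obtain ⟨i, hi, rfl, rfl⟩ := h
  refine ⟨k - 2 - i, by omega,
    by simp [RainbowPath.reverse, show k - 2 - (k - 2 - i) = i by omega], ?_⟩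
  simp only [RainbowPath.reverse, show k - 1 - (k - 2 - i) = i + 1 by omega,
    show k - 1 - (k - 2 - i + 1) = i by omega, Sym2.eq_swap]

section snoc

variable {u c : Fin n} (hu : u ∉ X.verts) (hc : c ∉ X.colours)
  (hadj : (G c).Adj (X.vert (k - 1)) u)

def snoc : RainbowPath G (k + 1) where
  vert i := if i < k then X.vert i else u
  colour i := if i < k - 1 then X.colour i else c
  injOn_vert := X.injOn_vert.ite_lt fun i hi h => hu (h ▸ X.vert_mem_verts hi)
  injOn_colour :=
    (X.injOn_colour.ite_lt (u := c) fun i hi h => hc (h ▸ X.colour_mem_colours hi)).mono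
      (Set.Iio_subset_Iio (by omega))
  adj i hi := by
    by_cases h : i < k - 1
    · simpa [h, show i < k by omega, show i + 1 < k by omega] using X.adj i h
    · obtain rfl : i = k - 1 := by omega
      simpa [h, show k - 1 < k by omega, show ¬ k - 1 + 1 < k by omega] using hadj

theorem snoc_vert_last : (X.snoc hu hc hadj).vert k = u := by
  simp [snoc]

theorem snoc_vert_of_lt {i : ℕ} (hi : i < k) : (X.snoc hu hc hadj).vert i = X.vert i := by
  simp [snoc, hi]

theorem verts_snoc_subset : (X.snoc hu hc hadj).verts ⊆ insert u X.verts := by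
  simp only [subset_iff, mem_verts, mem_insert]
  rintro _ ⟨i, hi, rfl⟩
  by_cases h : i < k
  · exact Or.inr ⟨i, h, by simp [snoc, h]⟩
  · exact Or.inl (by simp [snoc, h])

theorem colours_snoc_subset : (X.snoc hu hc hadj).colours ⊆ insert c X.colours := by
  simp only [subset_iff, mem_colours, mem_insert]
  rintro _ ⟨i, hi, rfl⟩
  by_cases h : i < k - 1
  · exact Or.inr ⟨i, h, by simp [snoc, h]⟩
  · exact Or.inl (by simp [snoc, h])

variable {X} in
theorem HasEdge.snoc {c' : Fin n} {e : Sym2 (Fin n)} (h : X.HasEdge c' e) :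
    (X.snoc hu hc hadj).HasEdge c' e := by
  obtain ⟨i, hi, rfl, rfl⟩ := h
  exact ⟨i, by omega, by simp [RainbowPath.snoc, hi],
    by simp [RainbowPath.snoc, show i < k by omega, show i + 1 < k by omega]⟩

theorem hasEdge_snoc (hk : 0 < k) : (X.snoc hu hc hadj).HasEdge c s(X.vert (k - 1), u) :=
  ⟨k - 1, by omega, by simp [snoc],
    by simp [snoc, show k - 1 < k by omega, Nat.sub_add_cancel hk]⟩

end snoc

section rotate

variable {i₀ : ℕ} {j : Fin n} (hi₀ : i₀ < k - 1) (hj : j ∉ X.colours)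
  (hadj : (G j).Adj (X.vert 0) (X.vert (i₀ + 1)))

/-- Pósa rotation: the path `vert i₀, …, vert 0, vert (i₀ + 1), …, vert (k - 1)`. -/
def rotate : RainbowPath G k where
  vert m := if m ≤ i₀ then X.vert (i₀ - m) else X.vert m
  colour m := if m < i₀ then X.colour (i₀ - 1 - m) else if m = i₀ then j else X.colour m
  injOn_vert m hm m' hm' h := by
    simp only [Set.mem_Iio] at hm hm'
    dsimp only at h
    split_ifs at h <;>
      have := X.injOn_vert (Set.mem_Iio.2 (by omega)) (Set.mem_Iio.2 (by omega)) h <;> omega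
  injOn_colour m hm m' hm' h := by
    simp only [Set.mem_Iio] at hm hm'
    dsimp only at h
    have hj' : ∀ i < k - 1, X.colour i ≠ j := fun i hi h => hj (h ▸ X.colour_mem_colours hi)
    split_ifs at h
    all_goals first
      | omega
      | exact absurd h (hj' _ (by omega))
      | exact absurd h.symm (hj' _ (by omega))
      | have := X.injOn_colour (Set.mem_Iio.2 (by omega)) (Set.mem_Iio.2 (by omega)) h; omega
  adj m hm := by
    rcases lt_trichotomy m i₀ with h | rfl | h
    · simp only [h, show m ≤ i₀ by omega, show m + 1 ≤ i₀ by omega, if_true]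
      rw [show i₀ - (m + 1) = i₀ - 1 - m by omega, show i₀ - m = i₀ - 1 - m + 1 by omega]
      exact (X.adj _ (by omega)).symm
    · simpa using hadj
    · simpa [show ¬ m ≤ i₀ by omega, show ¬ m < i₀ by omega, h.ne'] using X.adj m hm

theorem rotate_vert_zero : (X.rotate hi₀ hj hadj).vert 0 = X.vert i₀ := by
  simp [rotate]

theorem rotate_vert_last : (X.rotate hi₀ hj hadj).vert (k - 1) = X.vert (k - 1) := by
  simp [rotate, show ¬ k - 1 ≤ i₀ by omega]

theorem verts_rotate_subset : (X.rotate hi₀ hj hadj).verts ⊆ X.verts := by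
  simp only [subset_iff, mem_verts]
  rintro _ ⟨m, hm, rfl⟩
  by_cases h : m ≤ i₀
  · exact ⟨i₀ - m, by omega, by simp [rotate, h]⟩
  · exact ⟨m, hm, by simp [rotate, h]⟩

theorem colours_rotate_subset :
    (X.rotate hi₀ hj hadj).colours ⊆ insert j (X.colours.erase (X.colour i₀)) := by
  simp only [subset_iff, mem_colours, mem_insert, mem_erase]
  rintro _ ⟨m, hm, rfl⟩
  have hne : ∀ m' < k - 1, m' ≠ i₀ → X.colour m' ≠ X.colour i₀ := fun m' hm' h h' =>
    h (X.injOn_colour (Set.mem_Iio.2 hm') (Set.mem_Iio.2 hi₀) h')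
  simp only [rotate]
  split_ifs with h₁ h₂
  · exact Or.inr ⟨hne _ (by omega) (by omega), _, by omega, rfl⟩
  · exact Or.inl rfl
  · exact Or.inr ⟨hne _ hm h₂, _, hm, rfl⟩

variable {X} in
theorem HasEdge.rotate {c : Fin n} {e : Sym2 (Fin n)} (h : X.HasEdge c e)
    (hc : c ≠ X.colour i₀) : (X.rotate hi₀ hj hadj).HasEdge c e := by
  obtain ⟨i, hi, rfl, rfl⟩ := h
  rcases lt_trichotomy i i₀ with h | rfl | h
  · refine ⟨i₀ - 1 - i, by omega, by
      simp [RainbowPath.rotate, show i₀ - 1 - i < i₀ by omega,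
        show i₀ - 1 - (i₀ - 1 - i) = i by omega], ?_⟩
    simp only [RainbowPath.rotate, show i₀ - 1 - i ≤ i₀ by omega,
      show i₀ - 1 - i + 1 ≤ i₀ by omega, if_true, show i₀ - (i₀ - 1 - i) = i + 1 by omega,
      show i₀ - (i₀ - 1 - i + 1) = i by omega, Sym2.eq_swap]
  · exact absurd rfl hc
  · exact ⟨i, hi, by simp [RainbowPath.rotate, show ¬ i < i₀ by omega, h.ne'],
      by simp [RainbowPath.rotate, show ¬ i ≤ i₀ by omega, show ¬ i + 1 ≤ i₀ by omega]⟩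

end rotate

theorem one_lt_of_adj_last_first {c : Fin n} (hadj : (G c).Adj (X.vert (k - 1)) (X.vert 0)) :
    1 < k := by
  by_contra h
  rw [show k - 1 = 0 by omega] at hadj
  exact hadj.ne rfl

section close

variable {c : Fin n} (hc : c ∉ X.colours) (hadj : (G c).Adj (X.vert (k - 1)) (X.vert 0))

def close : RainbowCycle G k where
  vert i := X.vert (i % k)
  colour i := if i % k = k - 1 then c else X.colour (i % k)
  periodic_vert i := by simp
  periodic_colour i := by simp
  injOn_vert i hi j hj h := by
    simp only [Set.mem_Iio] at hi hj
    dsimp only at h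
    rw [Nat.mod_eq_of_lt hi, Nat.mod_eq_of_lt hj] at h
    exact X.injOn_vert hi hj h
  injOn_colour i hi j hj h := by
    simp only [Set.mem_Iio] at hi hj
    dsimp only at h
    rw [Nat.mod_eq_of_lt hi, Nat.mod_eq_of_lt hj] at h
    split_ifs at h with h₁ h₂ h₂
    · omega
    · exact absurd (h ▸ X.colour_mem_colours (by omega)) hc
    · exact absurd (h ▸ X.colour_mem_colours (by omega)) hc
    · exact X.injOn_colour (Set.mem_Iio.2 (by omega)) (Set.mem_Iio.2 (by omega)) h
  adj i := by
    have hk := X.one_lt_of_adj_last_first hadj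
    have hsucc : (i + 1) % k = (i % k + 1) % k := (Nat.mod_add_mod i k 1).symm
    have hr : i % k < k := Nat.mod_lt _ (by omega)
    by_cases h : i % k = k - 1
    · rw [hsucc, h, Nat.sub_add_cancel (by omega), Nat.mod_self, if_pos rfl]
      exact hadj
    · rw [hsucc, Nat.mod_eq_of_lt (show i % k + 1 < k by omega), if_neg h]
      exact X.adj _ (by omega)

theorem verts_close : (X.close hc hadj).verts = X.verts :=
  image_congr fun i hi => by simp [close, Nat.mod_eq_of_lt (mem_range.1 hi)]

theorem colours_close_subset : (X.close hc hadj).colours ⊆ insert c X.colours := by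
  simp only [subset_iff, RainbowCycle.colours, mem_image, mem_range, mem_insert]
  rintro _ ⟨i, hi, rfl⟩
  by_cases h : i = k - 1
  · exact Or.inl (by simp [close, h])
  · exact Or.inr (by
      simpa [close, Nat.mod_eq_of_lt hi, h] using X.colour_mem_colours (i := i) (by omega))

variable {X} in
theorem HasEdge.close {c' : Fin n} {e : Sym2 (Fin n)} (h : X.HasEdge c' e) :
    (X.close hc hadj).HasEdge c' e := by
  obtain ⟨i, hi, rfl, rfl⟩ := h
  exact ⟨i, by simp [RainbowPath.close, Nat.mod_eq_of_lt (show i < k by omega),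
      show i ≠ k - 1 by omega],
    by simp [RainbowPath.close, Nat.mod_eq_of_lt (show i < k by omega),
      Nat.mod_eq_of_lt (show i + 1 < k by omega)]⟩

end close

end RainbowPath

namespace RainbowCycle

variable {G} {k : ℕ} (Y : RainbowCycle G k)

def openAt (r : ℕ) : RainbowPath G k where
  vert i := Y.vert (r + i)
  colour i := Y.colour (r + i)
  injOn_vert i hi j hj h :=
    ((Y.periodic_vert.modEq_of_apply_eq Y.injOn_vert (Nat.zero_lt_of_lt hi) h).add_left_cancel'
      r).eq_of_lt_of_lt hi hj
  injOn_colour i hi j hj h := by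
    simp only [Set.mem_Iio] at hi hj
    exact ((Y.periodic_colour.modEq_of_apply_eq Y.injOn_colour (by omega) h).add_left_cancel'
      r).eq_of_lt_of_lt (by omega) (by omega)
  adj i _ := by simpa only [add_assoc] using Y.adj (r + i)

theorem verts_openAt_subset (r : ℕ) : (Y.openAt r).verts ⊆ Y.verts := by
  simp only [subset_iff, RainbowPath.mem_verts]
  rintro _ ⟨i, hi, rfl⟩
  exact Y.vert_mem_verts (by omega) _

theorem colours_openAt_subset (r : ℕ) :
    (Y.openAt r).colours ⊆ Y.colours.erase (Y.colour (r + (k - 1))) := by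
  simp only [subset_iff, RainbowPath.mem_colours, mem_erase]
  rintro _ ⟨i, hi, rfl⟩
  refine ⟨fun h => ?_, Y.colour_mem_colours (by omega) _⟩
  have := ((Y.periodic_colour.modEq_of_apply_eq Y.injOn_colour (by omega) h).add_left_cancel'
    r).eq_of_lt_of_lt (by omega) (by omega)
  omega

variable {Y} in
theorem HasEdge.openAt {c : Fin n} {e : Sym2 (Fin n)} (h : Y.HasEdge c e) (hk : 0 < k) (r : ℕ)
    (hc : c ≠ Y.colour (r + (k - 1))) : (Y.openAt r).HasEdge c e := by
  obtain ⟨i, rfl, rfl⟩ := h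
  -- the position of the edge `i` in the path `vert r, …, vert (r + k - 1)`
  set j := (i + k * r - r) % k
  have hj : r + j ≡ i [MOD k] := by
    have hr : r ≤ k * r := Nat.le_mul_of_pos_left r hk
    calc r + j ≡ r + (i + k * r - r) [MOD k] := (Nat.mod_modEq _ _).add_left r
      _ = i + k * r := by omega
      _ ≡ i [MOD k] := by simp [Nat.ModEq]
  have hjk : j < k - 1 := by
    have : j ≠ k - 1 := fun h' => hc (Y.periodic_colour.apply_eq_of_modEq (h' ▸ hj).symm)
    have := Nat.mod_lt (i + k * r - r) hk
    omega
  refine ⟨j, hjk, Y.periodic_colour.apply_eq_of_modEq hj, ?_⟩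
  simp only [RainbowCycle.openAt, ← add_assoc, Y.periodic_vert.apply_eq_of_modEq hj,
    Y.periodic_vert.apply_eq_of_modEq (hj.add_right 1)]

theorem exists_path_of_hasEdge (hk : 0 < k) {d a b : Fin n} (h : Y.HasEdge d s(a, b)) :
    ∃ X : RainbowPath G k, X.vert 0 = b ∧ X.vert (k - 1) = a ∧ X.verts ⊆ Y.verts ∧
      X.colours ⊆ Y.colours.erase d := by
  obtain ⟨i, rfl, he⟩ := h
  have hlast : (Y.openAt (i + 1)).vert (k - 1) = Y.vert i := by
    simp [openAt, show i + 1 + (k - 1) = i + k by omega, Y.periodic_vert i]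
  have hcol : Y.colour (i + 1 + (k - 1)) = Y.colour i := by
    rw [show i + 1 + (k - 1) = i + k by omega, Y.periodic_colour i]
  have hcolours := hcol ▸ Y.colours_openAt_subset (i + 1)
  rcases Sym2.eq_iff.1 he with ⟨rfl, rfl⟩ | ⟨rfl, rfl⟩
  · exact ⟨Y.openAt (i + 1), rfl, hlast, Y.verts_openAt_subset _, hcolours⟩
  · exact ⟨(Y.openAt (i + 1)).reverse, hlast, (Y.openAt (i + 1)).reverse_vert_last,
      (RainbowPath.verts_reverse_subset _).trans (Y.verts_openAt_subset _),
      (RainbowPath.colours_reverse_subset _).trans hcolours⟩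

theorem nonempty_succ_of_hasEdge (hk : 0 < k) {x a b f d : Fin n} (hx : x ∉ Y.verts)
    (hf : f ∉ Y.colours) (h : Y.HasEdge d s(a, b)) (hax : (G f).Adj a x) (hxb : (G d).Adj x b) :
    Nonempty (RainbowCycle G (k + 1)) := by
  obtain ⟨X, h0, hlast, hverts, hcolours⟩ := Y.exists_path_of_hasEdge hk h
  have hd : d ∈ Y.colours := by
    obtain ⟨i, rfl, -⟩ := h
    exact Y.colour_mem_colours hk i
  have hx' : x ∉ X.verts := fun h' => hx (hverts h')
  have hf' : f ∉ X.colours := fun h' => hf (mem_of_mem_erase (hcolours h'))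
  have hax' : (G f).Adj (X.vert (k - 1)) x := hlast ▸ hax
  have hd' : d ∉ (X.snoc hx' hf' hax').colours := fun h' => by
    rcases mem_insert.1 (X.colours_snoc_subset hx' hf' hax' h') with rfl | h'
    · exact hf hd
    · exact notMem_erase _ _ (hcolours h')
  refine ⟨(X.snoc hx' hf' hax').close hd' ?_⟩
  rwa [Nat.add_sub_cancel, X.snoc_vert_last, X.snoc_vert_of_lt _ _ _ hk, h0]

end RainbowCycle

variable {G} {δ : ℕ} (K : Finset (Fin n))

namespace RainbowCycle

variable {k : ℕ} (Y : RainbowCycle G k)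

theorem card_nbhd_le (c w : Fin n) :
    #(nbhd G c w) ≤ n - k + #((range k).filter fun r => (G c).Adj w (Y.vert r)) := by
  calc #(nbhd G c w)
      ≤ #(Y.vertsᶜ ∪ ((range k).filter fun r => (G c).Adj w (Y.vert r)).image Y.vert) :=
        card_le_card fun u hu => by
          by_cases hu' : u ∈ Y.verts
          · obtain ⟨r, hr, rfl⟩ := mem_image.1 hu'
            exact mem_union_right _ (mem_image_of_mem _ (mem_filter.2 ⟨hr, mem_nbhd.1 hu⟩))
          · exact mem_union_left _ (mem_compl.2 hu')
    _ ≤ #Y.vertsᶜ + #(((range k).filter fun r => (G c).Adj w (Y.vert r)).image Y.vert) :=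
        card_union_le _ _
    _ ≤ n - k + #((range k).filter fun r => (G c).Adj w (Y.vert r)) := by
        rw [card_compl, Fintype.card_fin, Y.card_verts]
        exact Nat.add_le_add_left card_image_le _

theorem card_filter_colour_pred_mem_le :
    #((range k).filter fun r => Y.colour (r + (k - 1)) ∈ K) ≤ #K := by
  refine card_le_card_of_injOn (fun r => Y.colour (r + (k - 1))) (fun r hr => (mem_filter.1 hr).2)
    fun r hr r' hr' h => ?_
  have hr : r < k := mem_range.1 (mem_filter.1 hr).1
  have hr' : r' < k := mem_range.1 (mem_filter.1 hr').1
  exact ((Y.periodic_colour.modEq_of_apply_eq Y.injOn_colour (by omega) h).add_right_cancel'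
    _).eq_of_lt_of_lt hr hr'

/-- Re-entering through the colour-`c` edge from `w` to `vert r` drops the cycle edge ending at
`vert r`; the degree of `w` leaves more choices of `r` than there are protected colours. -/
theorem exists_path_insert (hδ : ∀ c v, δ ≤ #(nbhd G c v)) (hK : n + #K < δ + k)
    {c w : Fin n} (hc : c ∉ Y.colours) (hw : w ∉ Y.verts) : ∃ X : RainbowPath G (k + 1),
      X.verts ⊆ insert w Y.verts ∧ ∀ c' ∈ K, ∀ e, Y.HasEdge c' e → X.HasEdge c' e := by
  have hk : 0 < k := by have := card_nbhd_lt G c w; have := hδ c w; omega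
  have hkn : k ≤ n := by simpa [Y.card_verts] using card_le_univ Y.verts
  have hR := Y.card_nbhd_le c w
  have hbad := Y.card_filter_colour_pred_mem_le K
  obtain ⟨r, hr, hr'⟩ := exists_mem_notMem_of_card_lt_card
    (s := (range k).filter fun r => Y.colour (r + (k - 1)) ∈ K)
    (t := (range k).filter fun r => (G c).Adj w (Y.vert r)) (by have := hδ c w; omega)
  simp only [mem_filter, mem_range] at hr hr'
  set X := (Y.openAt r).reverse
  have hXverts : X.verts ⊆ Y.verts :=
    (RainbowPath.verts_reverse_subset _).trans (Y.verts_openAt_subset r)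
  have hwX : w ∉ X.verts := fun h => hw (hXverts h)
  have hcX : c ∉ X.colours := fun h =>
    hc (mem_of_mem_erase (Y.colours_openAt_subset r (RainbowPath.colours_reverse_subset _ h)))
  have hadj : (G c).Adj (X.vert (k - 1)) w := by
    rw [RainbowPath.reverse_vert_last]
    exact hr.2.symm
  refine ⟨X.snoc hwX hcX hadj,
    (X.verts_snoc_subset hwX hcX hadj).trans (insert_subset_insert _ hXverts),
    fun c' hc' e he => ?_⟩
  exact ((he.openAt hk r fun h => hr' ⟨hr.1, h ▸ hc'⟩).reverse).snoc hwX hcX hadj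

end RainbowCycle

namespace RainbowPath

variable {k : ℕ} (X : RainbowPath G k)

theorem card_nbhd_first_le {x c : Fin n} (hsat : nbhd G c (X.vert 0) ⊆ insert x X.verts) :
    #(nbhd G c (X.vert 0)) ≤
      #((range (k - 1)).filter fun i => (G c).Adj (X.vert 0) (X.vert (i + 1))) + 1 := by
  refine (card_le_card fun u hu => ?_).trans ((card_insert_le x _).trans (Nat.add_le_add_right
    (card_image_le (f := fun i => X.vert (i + 1))) 1))
  rcases mem_insert.1 (hsat hu) with rfl | hu'
  · exact mem_insert_self _ _
  obtain ⟨p, hp, rfl⟩ := X.mem_verts.1 hu'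
  have hp0 : p ≠ 0 := by
    rintro rfl
    exact (mem_nbhd.1 hu).ne rfl
  refine mem_insert_of_mem
    (mem_image.2 ⟨p - 1, mem_filter.2 ⟨mem_range.2 (by omega), ?_⟩, ?_⟩) <;>
    rw [Nat.sub_add_cancel (by omega)]
  exact mem_nbhd.1 hu

theorem card_nbhd_last_le {x c : Fin n} (hsat : nbhd G c (X.vert (k - 1)) ⊆ insert x X.verts) :
    #(nbhd G c (X.vert (k - 1))) ≤
      #((range (k - 1)).filter fun i => (G c).Adj (X.vert (k - 1)) (X.vert i)) + 1 := by
  refine (card_le_card fun u hu => ?_).trans ((card_insert_le x _).trans (Nat.add_le_add_right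
    (card_image_le (f := X.vert)) 1))
  rcases mem_insert.1 (hsat hu) with rfl | hu'
  · exact mem_insert_self _ _
  obtain ⟨p, hp, rfl⟩ := X.mem_verts.1 hu'
  have hpk : p ≠ k - 1 := by
    rintro rfl
    exact (mem_nbhd.1 hu).ne rfl
  exact mem_insert_of_mem
    (mem_image_of_mem _ (mem_filter.2 ⟨mem_range.2 (by omega), mem_nbhd.1 hu⟩))

theorem card_filter_colour_mem_le : #((range (k - 1)).filter fun i => X.colour i ∈ K) ≤ #K :=
  card_le_card_of_injOn X.colour (fun _ hi => (mem_filter.1 hi).2)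
    (X.injOn_colour.mono fun _ hi => Set.mem_Iio.2 (mem_range.1 (mem_filter.1 hi).1))

theorem exists_crossing (hδ : ∀ c v, δ ≤ #(nbhd G c v)) (hk : 0 < k)
    (hK : k + #K + 1 < 2 * δ) {x j₁ j₂ : Fin n}
    (hsat₁ : nbhd G j₁ (X.vert 0) ⊆ insert x X.verts)
    (hsat₂ : nbhd G j₂ (X.vert (k - 1)) ⊆ insert x X.verts) :
    ∃ i₀ < k - 1, (G j₁).Adj (X.vert 0) (X.vert (i₀ + 1)) ∧
      (G j₂).Adj (X.vert (k - 1)) (X.vert i₀) ∧ X.colour i₀ ∉ K := by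
  set A := (range (k - 1)).filter fun i => (G j₁).Adj (X.vert 0) (X.vert (i + 1))
  set B := (range (k - 1)).filter fun i => (G j₂).Adj (X.vert (k - 1)) (X.vert i)
  have hA : δ ≤ #A + 1 := (hδ j₁ _).trans (X.card_nbhd_first_le hsat₁)
  have hB : δ ≤ #B + 1 := (hδ j₂ _).trans (X.card_nbhd_last_le hsat₂)
  have hAB : #A + #B ≤ #(A ∩ B) + (k - 1) := by
    have := card_union_add_card_inter A B
    have : #(A ∪ B) ≤ k - 1 :=
      (card_le_card (union_subset (filter_subset _ _) (filter_subset _ _))).trans (card_range _).le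
    omega
  have hbad := X.card_filter_colour_mem_le K
  obtain ⟨i₀, hi₀, hi₀'⟩ := exists_mem_notMem_of_card_lt_card
    (s := (range (k - 1)).filter fun i => X.colour i ∈ K) (t := A ∩ B) (by omega)
  simp only [A, B, mem_inter, mem_filter, mem_range] at hi₀ hi₀'
  exact ⟨i₀, hi₀.1.1, hi₀.1.2, hi₀.2.2, fun h => hi₀' ⟨hi₀.1.1, h⟩⟩

theorem exists_cycle_of_saturated (hδ : ∀ c v, δ ≤ #(nbhd G c v)) (hk : 0 < k)
    (hK : k + #K + 1 < 2 * δ) {x j₁ j₂ : Fin n} (hj₁ : j₁ ∉ X.colours)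
    (hj₂ : j₂ ∉ X.colours) (hj : j₁ ≠ j₂)
    (hsat₁ : nbhd G j₁ (X.vert 0) ⊆ insert x X.verts)
    (hsat₂ : nbhd G j₂ (X.vert (k - 1)) ⊆ insert x X.verts) :
    ∃ (Y : RainbowCycle G k) (c : Fin n), Y.verts ⊆ X.verts ∧ c ∉ Y.colours ∧
      ∀ c' ∈ K, ∀ e, X.HasEdge c' e → Y.HasEdge c' e := by
  obtain ⟨i₀, hi₀, hA, hB, hK₀⟩ := X.exists_crossing K hδ hk hK hsat₁ hsat₂
  have hrot := X.colours_rotate_subset hi₀ hj₁ hA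
  set X' := X.rotate hi₀ hj₁ hA
  have hj₂' : j₂ ∉ X'.colours := fun h => by
    rcases mem_insert.1 (hrot h) with h | h
    · exact hj h.symm
    · exact hj₂ (mem_of_mem_erase h)
  have hadj : (G j₂).Adj (X'.vert (k - 1)) (X'.vert 0) := by
    rw [X.rotate_vert_last, X.rotate_vert_zero]
    exact hB
  refine ⟨X'.close hj₂' hadj, X.colour i₀, (X'.verts_close hj₂' hadj).trans_subset
    (X.verts_rotate_subset hi₀ hj₁ hA), fun h => ?_,
    fun c' hc' e he => (he.rotate hi₀ hj₁ hA fun h => hK₀ (h ▸ hc')).close hj₂' hadj⟩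
  rcases mem_insert.1 (X'.colours_close_subset hj₂' hadj h) with h | h
  · exact hj₂ (h ▸ X.colour_mem_colours hi₀)
  rcases mem_insert.1 (hrot h) with h | h
  · exact hj₁ (h ▸ X.colour_mem_colours hi₀)
  · exact notMem_erase _ _ h

theorem exists_snoc_of_not_saturated {x c : Fin n} (hx : x ∉ X.verts) (hc : c ∉ X.colours)
    (h : ¬ nbhd G c (X.vert (k - 1)) ⊆ insert x X.verts) :
    ∃ X' : RainbowPath G (k + 1), x ∉ X'.verts ∧
      ∀ c' e, X.HasEdge c' e → X'.HasEdge c' e := by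
  obtain ⟨u, hu, hu'⟩ := not_subset.1 h
  rw [mem_insert, not_or] at hu'
  refine ⟨X.snoc hu'.2 hc (mem_nbhd.1 hu), fun h' => ?_, fun c' e he => he.snoc _ _ _⟩
  rcases mem_insert.1 (X.verts_snoc_subset _ _ _ h') with h' | h'
  · exact hu'.1 h'.symm
  · exact hx h'

theorem exists_succ (hδ : ∀ c v, δ ≤ #(nbhd G c v)) (hK : n + #K + 2 ≤ 2 * δ) {x : Fin n}
    (hx : x ∉ X.verts) (hk : k + 2 ≤ n) : ∃ X' : RainbowPath G (k + 1), x ∉ X'.verts ∧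
      ∀ c ∈ K, ∀ e, X.HasEdge c e → X'.HasEdge c e := by
  by_cases hsat : ∃ c ∉ X.colours, ¬ nbhd G c (X.vert (k - 1)) ⊆ insert x X.verts ∨
      ¬ nbhd G c (X.vert 0) ⊆ insert x X.verts
  · obtain ⟨c, hc, h | h⟩ := hsat
    · obtain ⟨X', hx', hX'⟩ := X.exists_snoc_of_not_saturated hx hc h
      exact ⟨X', hx', fun c _ e he => hX' c e he⟩
    · rw [← X.reverse_vert_last] at h
      obtain ⟨X', hx', hX'⟩ := X.reverse.exists_snoc_of_not_saturated
        (fun h' => hx (X.verts_reverse_subset h')) (fun h' => hc (X.colours_reverse_subset h'))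
        fun h' => h (h'.trans (insert_subset_insert _ X.verts_reverse_subset))
      exact ⟨X', hx', fun c _ e he => hX' c e he.reverse⟩
  push Not at hsat
  obtain ⟨j₁, hj₁, j₂, hj₂, hj⟩ := exists_pair_notMem (S := X.colours)
    (by have := X.card_colours_le; omega)
  have hδk : δ ≤ k + 1 := (hδ j₁ _).trans ((card_le_card (hsat j₁ hj₁).2).trans
    ((card_insert_le _ _).trans_eq (by rw [X.card_verts])))
  obtain ⟨Y, c, hY, hc, hXY⟩ := X.exists_cycle_of_saturated K hδ (by omega) (by omega)
    hj₁ hj₂ hj (hsat j₁ hj₁).2 (hsat j₂ hj₂).1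
  obtain ⟨w, hw⟩ := exists_notMem_of_card_lt (S := insert x X.verts)
    ((card_insert_le _ _).trans_lt (by rw [X.card_verts]; omega))
  rw [mem_insert, not_or] at hw
  obtain ⟨X', hX', hYX'⟩ := Y.exists_path_insert K hδ (by omega) hc fun h => hw.2 (hY h)
  refine ⟨X', fun h => ?_, fun c' hc' e he => hYX' c' hc' e (hXY c' hc' e he)⟩
  rcases mem_insert.1 (hX' h) with h | h
  · exact hw.1 h.symm
  · exact hx (hY h)

theorem exists_spanning (hδ : ∀ c v, δ ≤ #(nbhd G c v)) (hK : n + #K + 2 ≤ 2 * δ)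
    {x : Fin n} (hx : x ∉ X.verts) (hk : k ≤ n - 1) :
    ∃ X' : RainbowPath G (n - 1), x ∉ X'.verts ∧
      ∀ c ∈ K, ∀ e, X.HasEdge c e → X'.HasEdge c e := by
  suffices ∀ m, k ≤ m → m ≤ n - 1 → ∃ X' : RainbowPath G m, x ∉ X'.verts ∧
      ∀ c ∈ K, ∀ e, X.HasEdge c e → X'.HasEdge c e from this _ hk le_rfl
  intro m hkm
  induction m, hkm using Nat.le_induction with
  | base => exact fun _ => ⟨X, hx, fun _ _ _ he => he⟩
  | succ m _ ih =>
    intro hm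
    obtain ⟨X', hx', hX'⟩ := ih (by omega)
    obtain ⟨X'', hx'', hX''⟩ := X'.exists_succ K hδ hK hx' (by omega)
    exact ⟨X'', hx'', fun c hc e he => hX'' c hc e (hX' c hc e he)⟩

theorem exists_cycle_of_spanning (hδ : ∀ c v, δ ≤ #(nbhd G c v)) (hK : n + #K < 2 * δ)
    {x : Fin n} (X : RainbowPath G (n - 1)) (hx : x ∉ X.verts) :
    ∃ (Y : RainbowCycle G (n - 1)) (f : Fin n), x ∉ Y.verts ∧ f ∉ Y.colours ∧
      ∀ c ∈ K, ∀ e, X.HasEdge c e → Y.HasEdge c e := by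
  have hn : 2 < n := by have := card_nbhd_lt G x x; have := hδ x x; omega
  have hspan : insert x X.verts = univ := eq_univ_of_card _ (by
    rw [card_insert_of_notMem hx, X.card_verts, Fintype.card_fin]; omega)
  obtain ⟨j₁, hj₁, j₂, hj₂, hj⟩ := exists_pair_notMem (S := X.colours)
    (by have := X.card_colours_le; omega)
  obtain ⟨Y, f, hY, hf, hXY⟩ := X.exists_cycle_of_saturated K hδ (by omega) (by omega)
    hj₁ hj₂ hj (hspan ▸ subset_univ _) (hspan ▸ subset_univ _)
  exact ⟨Y, f, fun h => hx (hY h), hf, hXY⟩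

end RainbowPath

theorem le_card_inter_nbhd (hδ : ∀ c v, δ ≤ #(nbhd G c v)) (c v c' v' : Fin n) :
    2 * δ ≤ n + #(nbhd G c v ∩ nbhd G c' v') := by
  have := card_union_add_card_inter (nbhd G c v) (nbhd G c' v')
  have : #(nbhd G c v ∪ nbhd G c' v') ≤ n := by
    simpa using card_le_univ (nbhd G c v ∪ nbhd G c' v')
  have := hδ c v
  have := hδ c' v'
  omega

theorem exists_connector (hδ : ∀ c v, δ ≤ #(nbhd G c v)) {V C : Finset (Fin n)}
    (hV : n + #V < 2 * δ) (hC : #C + 2 ≤ n) (v w : Fin n) :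
    ∃ e₁ e₂ u, e₁ ∉ C ∧ e₂ ∉ C ∧ e₁ ≠ e₂ ∧ u ∉ V ∧
      (G e₁).Adj v u ∧ (G e₂).Adj u w := by
  obtain ⟨e₁, he₁, e₂, he₂, he⟩ := exists_pair_notMem hC
  have := le_card_inter_nbhd hδ e₁ v e₂ w
  obtain ⟨u, hu, huV⟩ := exists_mem_notMem_of_card_lt_card (s := V)
    (t := nbhd G e₁ v ∩ nbhd G e₂ w) (by omega)
  rw [mem_inter, mem_nbhd, mem_nbhd] at hu
  exact ⟨e₁, e₂, u, he₁, he₂, he, huV, hu.1, hu.2.symm⟩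

/-- Double counting the pairs `(c, a)` with `c ∈ F`, `a ∉ U` and `x` adjacent to `a` in
colour `c`. -/
theorem exists_adj_half (hδ : ∀ c v, δ ≤ #(nbhd G c v)) (x : Fin n) (F U : Finset (Fin n))
    (hU : n + 2 * #U ≤ 2 * δ) : ∃ a ∉ U, #F ≤ 2 * #(F.filter fun c => (G c).Adj x a) := by
  have hUn : #U < n := by have := card_nbhd_lt G x x; have := hδ x x; omega
  have hne : Uᶜ.Nonempty := by
    rw [← card_pos, card_compl, Fintype.card_fin]
    omega
  obtain ⟨a, ha, h⟩ := exists_le_of_sum_le hne (f := fun _ => #F)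
    (g := fun a => 2 * #(F.filter fun c => (G c).Adj x a)) <| by
    have hdeg : ∀ c, δ - #U ≤ #(Uᶜ.filter ((G c).Adj x)) := fun c =>
      (Nat.sub_le_sub_right (hδ c x) _).trans ((le_card_sdiff U _).trans
        (card_le_card fun v hv => by simpa [mem_sdiff] using And.symm (mem_sdiff.1 hv)))
    calc ∑ _ ∈ Uᶜ, #F = #Uᶜ * #F := by rw [sum_const, smul_eq_mul]
      _ ≤ 2 * (δ - #U) * #F :=
        Nat.mul_le_mul_right _ (by rw [card_compl, Fintype.card_fin]; omega)
      _ = 2 * ∑ _ ∈ F, (δ - #U) := by rw [sum_const, smul_eq_mul]; ring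
      _ ≤ 2 * ∑ c ∈ F, #(Uᶜ.filter ((G c).Adj x)) :=
        Nat.mul_le_mul_left _ (sum_le_sum fun c _ => hdeg c)
      _ = ∑ a ∈ Uᶜ, 2 * #(F.filter fun c => (G c).Adj x a) := by
        rw [← mul_sum]
        exact congrArg _
          (sum_card_bipartiteAbove_eq_sum_card_bipartiteBelow fun c a => (G c).Adj x a)
  exact ⟨a, mem_compl.1 ha, h⟩

namespace RainbowPath

variable {k : ℕ} (X : RainbowPath G k)

theorem exists_extend_through_edge {u a b e₁ e₂ d : Fin n} (hu : u ∉ X.verts)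
    (ha : a ∉ insert u X.verts) (hb : b ∉ insert a (insert u X.verts))
    (he₁ : e₁ ∉ X.colours) (he₂ : e₂ ∉ insert e₁ X.colours)
    (hd : d ∉ insert e₂ (insert e₁ X.colours))
    (h₁ : (G e₁).Adj (X.vert (k - 1)) u) (h₂ : (G e₂).Adj u a) (hab : (G d).Adj a b) :
    ∃ X' : RainbowPath G (k + 3), X'.verts ⊆ insert b (insert a (insert u X.verts)) ∧
      X'.colours ⊆ insert d (insert e₂ (insert e₁ X.colours)) ∧ X'.HasEdge d s(a, b) ∧
      ∀ c e, X.HasEdge c e → X'.HasEdge c e := by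
  set X₁ := X.snoc hu he₁ h₁
  have ha₁ : a ∉ X₁.verts := fun h => ha (X.verts_snoc_subset hu he₁ h₁ h)
  have he₂₁ : e₂ ∉ X₁.colours := fun h => he₂ (X.colours_snoc_subset hu he₁ h₁ h)
  have h₂' : (G e₂).Adj (X₁.vert (k + 1 - 1)) a := by
    rwa [Nat.add_sub_cancel, X.snoc_vert_last]
  set X₂ := X₁.snoc ha₁ he₂₁ h₂'
  have hv₂ : X₂.verts ⊆ insert a (insert u X.verts) :=
    (X₁.verts_snoc_subset ha₁ he₂₁ h₂').trans
      (insert_subset_insert _ (X.verts_snoc_subset hu he₁ h₁))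
  have hc₂ : X₂.colours ⊆ insert e₂ (insert e₁ X.colours) :=
    (X₁.colours_snoc_subset ha₁ he₂₁ h₂').trans
      (insert_subset_insert _ (X.colours_snoc_subset hu he₁ h₁))
  have hb₂ : b ∉ X₂.verts := fun h => hb (hv₂ h)
  have hd₂ : d ∉ X₂.colours := fun h => hd (hc₂ h)
  have hab' : (G d).Adj (X₂.vert (k + 1 + 1 - 1)) b := by
    rwa [Nat.add_sub_cancel, X₁.snoc_vert_last]
  refine ⟨X₂.snoc hb₂ hd₂ hab',
    (X₂.verts_snoc_subset hb₂ hd₂ hab').trans (insert_subset_insert _ hv₂),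
    (X₂.colours_snoc_subset hb₂ hd₂ hab').trans (insert_subset_insert _ hc₂), ?_,
    fun c e he => ((he.snoc hu he₁ h₁).snoc ha₁ he₂₁ h₂').snoc hb₂ hd₂ hab'⟩
  have := X₂.hasEdge_snoc hb₂ hd₂ hab' (by omega)
  rwa [Nat.add_sub_cancel, X₁.snoc_vert_last] at this

end RainbowPath

theorem exists_absorbing_triple (hδ : ∀ c v, δ ≤ #(nbhd G c v)) (x : Fin n)
    (F U D : Finset (Fin n)) (hU : n + 2 * #U + 2 ≤ 2 * δ) (hD : #D < n) :
    ∃ a b d, a ∉ U ∧ b ∉ insert a U ∧ d ∉ D ∧ (G d).Adj a b ∧ (G d).Adj x b ∧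
      #F ≤ 2 * #(F.filter fun c => (G c).Adj x a) := by
  obtain ⟨a, haU, hhalf⟩ := exists_adj_half hδ x F U (by omega)
  obtain ⟨d, hdD⟩ := exists_notMem_of_card_lt hD
  have := le_card_inter_nbhd hδ d a d x
  obtain ⟨b, hb, hbU⟩ := exists_mem_notMem_of_card_lt_card (s := insert a U)
    (t := nbhd G d a ∩ nbhd G d x) ((card_insert_le _ _).trans_lt (by omega))
  rw [mem_inter, mem_nbhd, mem_nbhd] at hb
  exact ⟨a, b, d, haU, hbU, hdD, hb.1, hb.2, hhalf⟩

variable (G) in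
/-- The edge `s(a t, b t)` of colour `d t` absorbs `x` in any colour `c` with `x` adjacent to
`a t`: it is replaced by the path `a t, x, b t` with colours `c, d t`. -/
structure Absorbers (x : Fin n) where
  size : ℕ
  a : ℕ → Fin n
  b : ℕ → Fin n
  d : ℕ → Fin n
  adj_ab : ∀ t < size, (G (d t)).Adj (a t) (b t)
  adj_xb : ∀ t < size, (G (d t)).Adj x (b t)
  a_ne_x : ∀ t < size, a t ≠ x
  a_ne_b : ∀ t < size, ∀ t' < size, a t ≠ b t'
  injOn_a : Set.InjOn a (Set.Iio size)
  injOn_b : Set.InjOn b (Set.Iio size)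
  injOn_d : Set.InjOn d (Set.Iio size)

namespace Absorbers

variable {x : Fin n} (A : Absorbers G x)

def verts : Finset (Fin n) := (range A.size).image A.a ∪ (range A.size).image A.b

def colours : Finset (Fin n) := (range A.size).image A.d

theorem a_mem_verts {t : ℕ} (ht : t < A.size) : A.a t ∈ A.verts :=
  mem_union_left _ (mem_image_of_mem _ (mem_range.2 ht))

theorem b_mem_verts {t : ℕ} (ht : t < A.size) : A.b t ∈ A.verts :=
  mem_union_right _ (mem_image_of_mem _ (mem_range.2 ht))

theorem d_mem_colours {t : ℕ} (ht : t < A.size) : A.d t ∈ A.colours :=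
  mem_image_of_mem _ (mem_range.2 ht)

theorem card_verts_le : #A.verts ≤ 2 * A.size :=
  (card_union_le _ _).trans (by
    have := (card_image_le (s := range A.size) (f := A.a)).trans (card_range _).le
    have := (card_image_le (s := range A.size) (f := A.b)).trans (card_range _).le
    omega)

theorem card_colours_le : #A.colours ≤ A.size :=
  card_image_le.trans (card_range _).le

def empty (x : Fin n) : Absorbers G x where
  size := 0
  a _ := x
  b _ := x
  d _ := x
  adj_ab _ h := absurd h (Nat.not_lt_zero _)
  adj_xb _ h := absurd h (Nat.not_lt_zero _)
  a_ne_x _ h := absurd h (Nat.not_lt_zero _)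
  a_ne_b _ h := absurd h (Nat.not_lt_zero _)
  injOn_a _ h := absurd h (Nat.not_lt_zero _)
  injOn_b _ h := absurd h (Nat.not_lt_zero _)
  injOn_d _ h := absurd h (Nat.not_lt_zero _)

section cons

variable {a₀ b₀ d₀ : Fin n} (hab : (G d₀).Adj a₀ b₀) (hxb : (G d₀).Adj x b₀)
  (hax : a₀ ≠ x) (ha : a₀ ∉ A.verts) (hb : b₀ ∉ A.verts) (hd : d₀ ∉ A.colours)

def cons : Absorbers G x where
  size := A.size + 1
  a | 0 => a₀ | t + 1 => A.a t
  b | 0 => b₀ | t + 1 => A.b t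
  d | 0 => d₀ | t + 1 => A.d t
  adj_ab
    | 0, _ => hab
    | t + 1, ht => A.adj_ab t (by omega)
  adj_xb
    | 0, _ => hxb
    | t + 1, ht => A.adj_xb t (by omega)
  a_ne_x
    | 0, _ => hax
    | t + 1, ht => A.a_ne_x t (by omega)
  a_ne_b
    | 0, _, 0, _ => hab.ne
    | 0, _, t' + 1, ht' => fun h => ha ((show a₀ = A.b t' from h) ▸ A.b_mem_verts (by omega))
    | t + 1, ht, 0, _ => fun h => hb ((show A.a t = b₀ from h) ▸ A.a_mem_verts (by omega))
    | t + 1, ht, t' + 1, ht' => A.a_ne_b t (by omega) t' (by omega)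
  injOn_a
    | 0, _, 0, _, _ => rfl
    | 0, _, t' + 1, ht', h =>
      absurd ((show a₀ = A.a t' from h) ▸ A.a_mem_verts (Nat.lt_of_succ_lt_succ ht')) ha
    | t + 1, ht, 0, _, h =>
      absurd ((show A.a t = a₀ from h) ▸ A.a_mem_verts (Nat.lt_of_succ_lt_succ ht)) ha
    | t + 1, ht, t' + 1, ht', h => congrArg (· + 1)
        (A.injOn_a (Nat.lt_of_succ_lt_succ ht) (Nat.lt_of_succ_lt_succ ht') h)
  injOn_b
    | 0, _, 0, _, _ => rfl
    | 0, _, t' + 1, ht', h =>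
      absurd ((show b₀ = A.b t' from h) ▸ A.b_mem_verts (Nat.lt_of_succ_lt_succ ht')) hb
    | t + 1, ht, 0, _, h =>
      absurd ((show A.b t = b₀ from h) ▸ A.b_mem_verts (Nat.lt_of_succ_lt_succ ht)) hb
    | t + 1, ht, t' + 1, ht', h => congrArg (· + 1)
        (A.injOn_b (Nat.lt_of_succ_lt_succ ht) (Nat.lt_of_succ_lt_succ ht') h)
  injOn_d
    | 0, _, 0, _, _ => rfl
    | 0, _, t' + 1, ht', h =>
      absurd ((show d₀ = A.d t' from h) ▸ A.d_mem_colours (Nat.lt_of_succ_lt_succ ht')) hd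
    | t + 1, ht, 0, _, h =>
      absurd ((show A.d t = d₀ from h) ▸ A.d_mem_colours (Nat.lt_of_succ_lt_succ ht)) hd
    | t + 1, ht, t' + 1, ht', h => congrArg (· + 1)
        (A.injOn_d (Nat.lt_of_succ_lt_succ ht) (Nat.lt_of_succ_lt_succ ht') h)

theorem verts_cons_subset :
    (A.cons hab hxb hax ha hb hd).verts ⊆ insert a₀ (insert b₀ A.verts) := by
  simp only [subset_iff, verts, mem_union, mem_image, mem_range, mem_insert]
  rintro _ (⟨_ | t, ht, rfl⟩ | ⟨_ | t, ht, rfl⟩)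
  · exact Or.inl rfl
  · exact Or.inr (Or.inr (Or.inl ⟨t, by simpa [cons] using ht, rfl⟩))
  · exact Or.inr (Or.inl rfl)
  · exact Or.inr (Or.inr (Or.inr ⟨t, by simpa [cons] using ht, rfl⟩))

theorem colours_cons_subset : (A.cons hab hxb hax ha hb hd).colours ⊆ insert d₀ A.colours := by
  simp only [subset_iff, colours, mem_image, mem_range, mem_insert]
  rintro _ ⟨_ | t, ht, rfl⟩
  · exact Or.inl rfl
  · exact Or.inr ⟨t, by simpa [cons] using ht, rfl⟩

end cons

/-- Each round serves at least half of the colours of `F` not served so far, so `m` rounds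
serve all of `F` when `#F < 2 ^ m`. -/
theorem exists_covering (hδ : ∀ c v, δ ≤ #(nbhd G c v)) (x : Fin n) (m : ℕ) :
    ∀ F U D : Finset (Fin n), x ∈ U → #F < 2 ^ m → n + 2 * #U + 4 * m ≤ 2 * δ →
      #D + m < n →
      ∃ A : Absorbers G x, A.size ≤ m ∧ Disjoint A.verts U ∧ Disjoint A.colours D ∧
        ∀ c ∈ F, ∃ t < A.size, (G c).Adj x (A.a t) := by
  induction m with
  | zero =>
    intro F U D _ hF _ _
    refine ⟨empty x, le_rfl, by simp [verts, empty], by simp [colours, empty], fun c hc => ?_⟩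
    simp [card_eq_zero.1 (Nat.lt_one_iff.1 (by simpa using hF))] at hc
  | succ m ih =>
    intro F U D hxU hF hU hD
    obtain ⟨a, b, d, haU, hbU, hdD, hab, hxb, hhalf⟩ :=
      exists_absorbing_triple hδ x F U D (by omega) (by omega)
    rw [mem_insert, not_or] at hbU
    have hsplit := card_filter_add_card_filter_not (s := F) fun c => (G c).Adj x a
    obtain ⟨A, hAm, hAU, hAD, hAF⟩ := ih (F.filter fun c => ¬ (G c).Adj x a)
      (insert b (insert a U)) (insert d D) (mem_insert_of_mem (mem_insert_of_mem hxU))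
      (by rw [pow_succ] at hF; omega)
      (by have := card_insert_le b (insert a U); have := card_insert_le a U; omega)
      (by have := card_insert_le d D; omega)
    have hax : a ≠ x := fun h => haU (h ▸ hxU)
    have ha := disjoint_right.1 hAU (mem_insert_of_mem (mem_insert_self a U))
    have hb := disjoint_right.1 hAU (mem_insert_self b _)
    have hd := disjoint_right.1 hAD (mem_insert_self d D)
    refine ⟨A.cons hab hxb hax ha hb hd, by simp [cons]; omega,
      (disjoint_insert_left.2 ⟨haU, disjoint_insert_left.2 ⟨hbU.2, hAU.mono_right
        ((subset_insert _ _).trans (subset_insert _ _))⟩⟩).mono_left (A.verts_cons_subset ..),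
      (disjoint_insert_left.2 ⟨hdD, hAD.mono_right (subset_insert _ _)⟩).mono_left
        (A.colours_cons_subset ..), fun c hc => ?_⟩
    by_cases hca : (G c).Adj x a
    · exact ⟨0, Nat.succ_pos _, hca⟩
    · obtain ⟨t, ht, hct⟩ := hAF c (mem_filter.2 ⟨hc, hca⟩)
      exact ⟨t + 1, Nat.succ_lt_succ ht, hct⟩

def IsThreadedUpTo (s : ℕ) {k : ℕ} (X : RainbowPath G k) : Prop :=
  x ∉ X.verts ∧ (∀ t < s, X.HasEdge (A.d t) s(A.a t, A.b t)) ∧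
    ∀ t, s ≤ t → t < A.size →
      A.a t ∉ X.verts ∧ A.b t ∉ X.verts ∧ A.d t ∉ X.colours

variable {A} in
theorem IsThreadedUpTo.succ {s k k' : ℕ} {X : RainbowPath G k} {X' : RainbowPath G k'}
    (hX : A.IsThreadedUpTo s X) (hs : s < A.size) {u e₁ e₂ : Fin n} (hux : u ≠ x)
    (hu : u ∉ A.verts) (he₁ : e₁ ∉ A.colours) (he₂ : e₂ ∉ A.colours)
    (hv : X'.verts ⊆ insert (A.b s) (insert (A.a s) (insert u X.verts)))
    (hc : X'.colours ⊆ insert (A.d s) (insert e₂ (insert e₁ X.colours)))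
    (hnew : X'.HasEdge (A.d s) s(A.a s, A.b s)) (hold : ∀ c e, X.HasEdge c e → X'.HasEdge c e) :
    A.IsThreadedUpTo (s + 1) X' := by
  obtain ⟨hx, hedges, hfut⟩ := hX
  refine ⟨fun h => ?_, fun t ht => ?_,
    fun t ht htA => ⟨fun h => ?_, fun h => ?_, fun h => ?_⟩⟩
  · refine (?_ : x ∉ insert (A.b s) (insert (A.a s) (insert u X.verts))) (hv h)
    simp only [mem_insert, not_or]
    exact ⟨(A.adj_xb s hs).ne, (A.a_ne_x s hs).symm, hux.symm, hx⟩
  · rcases Nat.lt_succ_iff_lt_or_eq.1 ht with ht | rfl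
    · exact hold _ _ (hedges t ht)
    · exact hnew
  · refine (?_ : A.a t ∉ insert (A.b s) (insert (A.a s) (insert u X.verts))) (hv h)
    simp only [mem_insert, not_or]
    exact ⟨A.a_ne_b t htA s hs, fun h => by have := A.injOn_a htA hs h; omega,
      fun h => hu (h ▸ A.a_mem_verts htA), (hfut t (by omega) htA).1⟩
  · refine (?_ : A.b t ∉ insert (A.b s) (insert (A.a s) (insert u X.verts))) (hv h)
    simp only [mem_insert, not_or]
    exact ⟨fun h => by have := A.injOn_b htA hs h; omega, fun h => A.a_ne_b s hs t htA h.symm,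
      fun h => hu (h ▸ A.b_mem_verts htA), (hfut t (by omega) htA).2.1⟩
  · refine (?_ : A.d t ∉ insert (A.d s) (insert e₂ (insert e₁ X.colours))) (hc h)
    simp only [mem_insert, not_or]
    exact ⟨fun h => by have := A.injOn_d htA hs h; omega,
      fun h => he₂ (h ▸ A.d_mem_colours htA), fun h => he₁ (h ▸ A.d_mem_colours htA),
      (hfut t (by omega) htA).2.2⟩

theorem exists_isThreadedUpTo_zero (hδ : ∀ c v, δ ≤ #(nbhd G c v))
    (hA : n + 5 * A.size ≤ 2 * δ) : ∃ X : RainbowPath G 1, A.IsThreadedUpTo 0 X := by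
  have := hδ x x
  have := card_nbhd_lt G x x
  obtain ⟨v, hv⟩ := exists_notMem_of_card_lt (S := insert x A.verts)
    ((card_insert_le _ _).trans_lt (by have := A.card_verts_le; omega))
  rw [mem_insert, not_or] at hv
  refine ⟨RainbowPath.single v, by simpa [RainbowPath.verts_single] using Ne.symm hv.1,
    fun t ht => absurd ht (Nat.not_lt_zero t),
    fun t _ ht => ⟨?_, ?_, by simp [RainbowPath.colours]⟩⟩
  · rw [RainbowPath.verts_single, mem_singleton]
    exact fun h => hv.2 (h ▸ A.a_mem_verts ht)
  · rw [RainbowPath.verts_single, mem_singleton]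
    exact fun h => hv.2 (h ▸ A.b_mem_verts ht)

theorem exists_isThreadedUpTo_succ (hδ : ∀ c v, δ ≤ #(nbhd G c v))
    (hA : n + 5 * A.size ≤ 2 * δ) {s : ℕ} (hs : s < A.size) (X : RainbowPath G (3 * s + 1))
    (hX : A.IsThreadedUpTo s X) :
    ∃ X' : RainbowPath G (3 * (s + 1) + 1), A.IsThreadedUpTo (s + 1) X' := by
  obtain ⟨has, hbs, hds⟩ := hX.2.2 s le_rfl hs
  have := hδ x x
  have := card_nbhd_lt G x x
  obtain ⟨e₁, e₂, u, he₁, he₂, he, hu, h₁, h₂⟩ := exists_connector hδ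
    (V := insert x (X.verts ∪ A.verts)) (C := X.colours ∪ A.colours)
    (by
      have := (card_insert_le x _).trans (Nat.add_le_add_right (card_union_le X.verts A.verts) 1)
      have := A.card_verts_le
      have := X.card_verts
      omega)
    (by
      have := card_union_le X.colours A.colours
      have := X.card_colours_le
      have := A.card_colours_le
      omega) (X.vert (3 * s + 1 - 1)) (A.a s)
  simp only [mem_insert, mem_union, not_or] at he₁ he₂ hu
  obtain ⟨X', hv, hc, hnew, hold⟩ := X.exists_extend_through_edge hu.2.1
    (by simpa using ⟨fun h => hu.2.2 (h ▸ A.a_mem_verts hs), has⟩)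
    (by simpa using ⟨(A.a_ne_b s hs s hs).symm, fun h => hu.2.2 (h ▸ A.b_mem_verts hs), hbs⟩)
    he₁.1 (by simpa using ⟨he.symm, he₂.1⟩)
    (by simpa using ⟨fun h => he₂.2 (h ▸ A.d_mem_colours hs),
      fun h => he₁.2 (h ▸ A.d_mem_colours hs), hds⟩) h₁ h₂ (A.adj_ab s hs)
  exact ⟨X', hX.succ hs hu.1 hu.2.2 he₁.2 he₂.2 hv hc hnew hold⟩

theorem exists_path (hδ : ∀ c v, δ ≤ #(nbhd G c v)) (hA : n + 5 * A.size ≤ 2 * δ) :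
    ∃ X : RainbowPath G (3 * A.size + 1), x ∉ X.verts ∧
      ∀ t < A.size, X.HasEdge (A.d t) s(A.a t, A.b t) := by
  suffices ∀ s ≤ A.size, ∃ X : RainbowPath G (3 * s + 1), A.IsThreadedUpTo s X by
    obtain ⟨X, hx, hX, -⟩ := this A.size le_rfl
    exact ⟨X, hx, hX⟩
  intro s hs
  induction s with
  | zero => exact A.exists_isThreadedUpTo_zero hδ hA
  | succ s ih =>
    obtain ⟨X, hX⟩ := ih (by omega)
    exact A.exists_isThreadedUpTo_succ hδ hA (by omega) X hX

end Absorbers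

theorem nonempty_rainbowCycle (hδ : ∀ c v, δ ≤ #(nbhd G c v)) (hn : 0 < n) {m : ℕ}
    (hm : n < 2 ^ m) (h : n + 5 * m + 4 ≤ 2 * δ) : Nonempty (RainbowCycle G n) := by
  set x : Fin n := ⟨0, hn⟩
  have := card_nbhd_lt G x x
  have := hδ x x
  obtain ⟨A, hAm, -, -, hcov⟩ := Absorbers.exists_covering hδ x m univ {x} ∅
    (mem_singleton_self x) (by rwa [card_univ, Fintype.card_fin])
    (by rw [card_singleton]; omega) (by rw [card_empty]; omega)
  have := A.card_colours_le
  obtain ⟨X, hx, hX⟩ := A.exists_path hδ (by omega)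
  obtain ⟨X', hx', hX'⟩ := X.exists_spanning A.colours hδ (by omega) hx (by omega)
  obtain ⟨Y, f, hxY, hf, hY⟩ := X'.exists_cycle_of_spanning A.colours hδ (by omega) hx'
  obtain ⟨t, ht, hxa⟩ := hcov f (mem_univ f)
  have hd := A.d_mem_colours ht
  have := Y.nonempty_succ_of_hasEdge (by omega) hxY hf (hY _ hd _ (hX' _ hd _ (hX t ht)))
    hxa.symm (A.adj_xb t ht)
  rwa [Nat.sub_add_cancel hn] at this

theorem eventually_add_log_le_two_mul_ceil {α : ℝ} (hα : 0 < α) :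
    ∀ᶠ n : ℕ in Filter.atTop,
      0 < n ∧ n + 5 * (Nat.log 2 n + 1) + 4 ≤ 2 * ⌈(1 / 2 + α) * n⌉₊ := by
  have hlog : ∀ᶠ n : ℕ in Filter.atTop, Real.log n ≤ α * Real.log 2 / 5 * n :=
    (tendsto_natCast_atTop_atTop.eventually
      (Real.isLittleO_log_id_atTop.bound (c := α * Real.log 2 / 5) (by positivity))).mono
      fun n hn => (le_abs_self _).trans (by simpa using hn)
  have hlarge : ∀ᶠ n : ℕ in Filter.atTop, (9 : ℝ) ≤ α * n :=
    (tendsto_natCast_atTop_atTop.eventually_ge_atTop (9 / α)).mono fun n hn => by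
      rwa [div_le_iff₀ hα, mul_comm] at hn
  filter_upwards [hlog, hlarge, Filter.eventually_gt_atTop 0] with n hlog hlarge hn
  refine ⟨hn, ?_⟩
  have hlog2 : (Nat.log 2 n : ℝ) ≤ α * n / 5 := by
    calc (Nat.log 2 n : ℝ) ≤ Real.logb 2 n := by exact_mod_cast Real.natLog_le_logb n 2
      _ = Real.log n / Real.log 2 := rfl
      _ ≤ α * Real.log 2 / 5 * n / Real.log 2 := by gcongr
      _ = α * n / 5 := by field_simp
  have hceil := Nat.le_ceil ((1 / 2 + α) * n)
  exact_mod_cast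
    (show (n + 5 * (Nat.log 2 n + 1) + 4 : ℝ) ≤ 2 * ⌈(1 / 2 + α) * n⌉₊ by linarith)

end TransversalHamiltonCycle

/-- Proposition 3.9 (prop:sketcheasy, Cheng–Wang–Zhao / Joos–Kim): any collection of `n`
graphs on `[n]`, each with minimum degree at least `(1/2 + α)n`, contains a transversal
copy of a Hamilton cycle. -/
theorem stmt_14 (α : ℝ) (hα : 0 < α) :
    ∃ n₀ : ℕ, ∀ n : ℕ, n₀ ≤ n →
      ∀ G : Fin n → SimpleGraph (Fin n),
        (∀ j : Fin n, ∀ v : Fin n,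
          (1 / 2 + α) * n ≤ ((Finset.univ.filter (fun u => (G j).Adj v u)).card : ℝ)) →
        ∃ (σ : ℕ → Fin n) (φ : ℕ → Fin n),
          Set.BijOn σ {i | i < n} Set.univ ∧
          Set.BijOn φ {i | i < n} Set.univ ∧
          ∀ i < n, (G (φ i)).Adj (σ i) (σ ((i + 1) % n)) := by
  obtain ⟨n₀, hn₀⟩ :=
    (TransversalHamiltonCycle.eventually_add_log_le_two_mul_ceil hα).exists_forall_of_atTop
  refine ⟨n₀, fun n hn G hG => ?_⟩
  obtain ⟨hn, hδ⟩ := hn₀ n hn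
  obtain ⟨Z⟩ := TransversalHamiltonCycle.nonempty_rainbowCycle (G := G)
    (fun c v => Nat.ceil_le.2 (hG c v)) hn (Nat.lt_pow_succ_log_self one_lt_two n) hδ
  refine ⟨Z.vert, Z.colour, Z.injOn_vert.bijOn_univ, Z.injOn_colour.bijOn_univ, fun i _ => ?_⟩
  rw [Z.periodic_vert.map_mod_nat]
  exact Z.adj i
end
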